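/- arXiv:2112.12811 — 4 statements merged into one kernel-verified Lean document; each statement's English description precedes it below -/
import Mathlib

section
/- The subspace of (4n+1)×(4n+1) matrices Y (blocks Y_{ij}, i,j ∈ [−n,n], with Y_{00}=0) satisfying I Y_{−i,−j} + Y_{−j,−i}^T I = 0, J Y_{i,j} + Y_{j,i}^T J = 0, I Y_{−i,j} + Y_{j,−i}^T J = 0 for i,j ∈ [1,n], and Y_{0,−j} + Y_{−j,0}^T I = 0, Y_{0,j} − Y_{j,0}^T J = 0 for j ∈ [0,n], is closed under the graded bracket ⟦x,y⟧ = xy − (−1)^{a·b} yx. -/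
open Matrix

noncomputable section

/-- The 2×2 matrix `I = [[0,1],[1,0]]`. -/
def IM : Matrix (Fin 2) (Fin 2) ℂ := !![0, 1; 1, 0]

/-- The 2×2 matrix `J = [[0,1],[−1,0]]`. -/
def JM : Matrix (Fin 2) (Fin 2) ℂ := !![0, 1; -1, 0]

/-- Starting position of block `i`: `2i−1` for `i > 0`, `2i` for `i ≤ 0`. -/
def pstart (i : ℤ) : ℤ := if 0 < i then 2 * i - 1 else 2 * i

/-- The `Fin (4n+1)` index corresponding to position `p ∈ [−2n, 2n]`. -/
def finOf (n : ℕ) (p : ℤ) : Fin (4 * n + 1) :=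
  ⟨(p + 2 * n).toNat % (4 * n + 1), Nat.mod_lt _ (by omega)⟩

/-- The entry of a `(4n+1)×(4n+1)` matrix at positions `p, q ∈ [−2n, 2n]`. -/
def ent (n : ℕ) (Y : Matrix (Fin (4 * n + 1)) (Fin (4 * n + 1)) ℂ) (p q : ℤ) : ℂ :=
  Y (finOf n p) (finOf n q)

/-- The 2×2 block `Y_{ij}` for `i, j ≠ 0`. -/
def blk (n : ℕ) (Y : Matrix (Fin (4 * n + 1)) (Fin (4 * n + 1)) ℂ) (i j : ℤ) :
    Matrix (Fin 2) (Fin 2) ℂ :=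
  Matrix.of fun a b => ent n Y (pstart i + (a.val : ℤ)) (pstart j + (b.val : ℤ))

/-- The 1×2 block `Y_{0,j}` for `j ≠ 0`. -/
def blkRow (n : ℕ) (Y : Matrix (Fin (4 * n + 1)) (Fin (4 * n + 1)) ℂ) (j : ℤ) :
    Matrix (Fin 1) (Fin 2) ℂ :=
  Matrix.of fun _ b => ent n Y 0 (pstart j + (b.val : ℤ))

/-- The 2×1 block `Y_{j,0}` for `j ≠ 0`. -/
def blkCol (n : ℕ) (Y : Matrix (Fin (4 * n + 1)) (Fin (4 * n + 1)) ℂ) (j : ℤ) :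
    Matrix (Fin 2) (Fin 1) ℂ :=
  Matrix.of fun a _ => ent n Y (pstart j + (a.val : ℤ)) 0

/-- Membership in `pso(2n+1|2n)`: `Y₀₀ = 0` and the block conditions
`I Y_{−i,−j} + Y_{−j,−i}ᵀ I = 0`, `J Y_{ij} + Y_{ji}ᵀ J = 0`, `I Y_{−i,j} + Y_{j,−i}ᵀ J = 0`
for `i, j ∈ [1,n]`, and `Y_{0,−j} + Y_{−j,0}ᵀ I = 0`, `Y_{0,j} − Y_{j,0}ᵀ J = 0`
for `j ∈ [0,n]` (the case `j = 0` being the condition `Y₀₀ = 0`). -/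
def psoMem (n : ℕ) (Y : Matrix (Fin (4 * n + 1)) (Fin (4 * n + 1)) ℂ) : Prop :=
  ent n Y 0 0 = 0 ∧
  (∀ i j : ℤ, 1 ≤ i → i ≤ n → 1 ≤ j → j ≤ n →
    IM * blk n Y (-i) (-j) + (blk n Y (-j) (-i))ᵀ * IM = 0 ∧
    JM * blk n Y i j + (blk n Y j i)ᵀ * JM = 0 ∧
    IM * blk n Y (-i) j + (blk n Y j (-i))ᵀ * JM = 0) ∧
  (∀ j : ℤ, 1 ≤ j → j ≤ n →
    blkRow n Y (-j) + (blkCol n Y (-j))ᵀ * IM = 0 ∧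
    blkRow n Y j - (blkCol n Y j)ᵀ * JM = 0)

/-- Block index of a position. -/
def blockIdx (p : ℤ) : ℤ :=
  if 0 < p then (p + 1) / 2 else if p < 0 then (p - 1) / 2 else 0

/-- `Z₂×Z₂`-degree of a block pair. -/
def blkdeg (i j : ℤ) : ZMod 2 × ZMod 2 :=
  if (0 < i ∧ 0 < j) ∨ (i < 0 ∧ j < 0) then (0, 0)
  else if (i = 0 ∧ j < 0) ∨ (i < 0 ∧ j = 0) then (1, 1)
  else if (i = 0 ∧ 0 < j) ∨ (0 < i ∧ j = 0) then (1, 0)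
  else if (0 < i ∧ j < 0) ∨ (i < 0 ∧ 0 < j) then (0, 1)
  else (0, 0)

/-- Homogeneity of degree `d`. -/
def homog (n : ℕ) (d : ZMod 2 × ZMod 2)
    (x : Matrix (Fin (4 * n + 1)) (Fin (4 * n + 1)) ℂ) : Prop :=
  ∀ a b : Fin (4 * n + 1),
    blkdeg (blockIdx ((a.val : ℤ) - 2 * n)) (blockIdx ((b.val : ℤ) - 2 * n)) ≠ d →
    x a b = 0

/-- The sign `(−1)^{a·b}`. -/
def sgn (a b : ZMod 2 × ZMod 2) : ℂ :=
  if a.1 * b.1 + a.2 * b.2 = 0 then 1 else -1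

/-- The graded bracket. -/
def gbr (n : ℕ) (a b : ZMod 2 × ZMod 2)
    (x y : Matrix (Fin (4 * n + 1)) (Fin (4 * n + 1)) ℂ) :
    Matrix (Fin (4 * n + 1)) (Fin (4 * n + 1)) ℂ :=
  x * y - sgn a b • (y * x)

/-!
Let `Ω = diag(I, …, I, 1, J, …, J)`: a signed permutation matrix pairing each position `p` with
its `partner p` in the same block, with `Ω p (partner p) = formCoeff p`. Every defining block
condition of `pso(2n+1|2n)` is an instance of the single entrywise relation
`Ω_p Y(τp, q) + ρ(p, q) Ω_q Y(τq, p) = 0`, i.e. `Y(τq, p) = σ(p, q) Y(τp, q)`, where `τ = partner`,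
`ρ = pairSign` and `σ = skewSign`. Closure of this relation under a graded bracket is formal:
reindex the sum defining `(xy)(τq, p)` by `s ↦ τ s` and apply the relation to both factors. The
signs collected are `σ(τs, q) σ(p, s)`, and on every nonzero term of homogeneous `x, y` of degrees
`a, b` this equals `-σ(p, q) (-1)^{a·b}`, a check over the signs of `p, s, q`.
-/

namespace Matrix

variable {ι R G : Type*} [CommRing R]

def IsSignedSkew (τ : ι → ι) (σ : ι → ι → R) (Y : Matrix ι ι R) : Prop :=
  ∀ p q, Y (τ q) p = σ p q * Y (τ p) q

def IsHomogeneous (deg : ι → ι → G) (d : G) (Y : Matrix ι ι R) : Prop :=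
  ∀ p q, deg p q ≠ d → Y p q = 0

variable {τ : ι → ι} {σ : ι → ι → R} {deg : ι → ι → G} {ε : G → G → R} {a b : G}
  {x y : Matrix ι ι R}

lemma IsSignedSkew.mul_apply_partner (hτ : Function.Involutive τ)
    (hdeg : ∀ p q, deg (τ p) q = deg p q)
    (hσ : ∀ p s q, σ (τ s) q * σ p s = -σ p q * ε (deg s q) (deg p s))
    (hx : IsSignedSkew τ σ x) (hy : IsSignedSkew τ σ y)
    (hxa : IsHomogeneous deg a x) (hyb : IsHomogeneous deg b y) (p q s : ι) :
    x (τ q) (τ s) * y (τ s) p = -(σ p q * ε a b) * (y (τ p) s * x s q) := by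
  rw [hx (τ s) q, hτ s, hy p s]
  by_cases hxs : x s q = 0
  · simp [hxs]
  by_cases hys : y (τ p) s = 0
  · simp [hys]
  have h := hσ p s q
  rw [not_not.mp (mt (hxa s q) hxs), ← hdeg, not_not.mp (mt (hyb _ s) hys)] at h
  linear_combination (x s q * y (τ p) s) * h

theorem IsSignedSkew.sub_smul_mul [Fintype ι] (hτ : Function.Involutive τ)
    (hdeg : ∀ p q, deg (τ p) q = deg p q)
    (hσ : ∀ p s q, σ (τ s) q * σ p s = -σ p q * ε (deg s q) (deg p s))
    (hε : ε b a = ε a b) (hε2 : ε a b * ε a b = 1)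
    (hx : IsSignedSkew τ σ x) (hy : IsSignedSkew τ σ y)
    (hxa : IsHomogeneous deg a x) (hyb : IsHomogeneous deg b y) :
    IsSignedSkew τ σ (x * y - ε a b • (y * x)) := by
  intro p q
  simp only [sub_apply, smul_apply, mul_apply, smul_eq_mul, Finset.mul_sum,
    ← Finset.sum_sub_distrib]
  rw [← Equiv.sum_comp (hτ.toPerm τ)]
  refine Finset.sum_congr rfl fun s _ => ?_
  simp only [Function.Involutive.coe_toPerm]
  rw [hx.mul_apply_partner hτ hdeg hσ hy hxa hyb, hy.mul_apply_partner hτ hdeg hσ hx hyb hxa, hε]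
  linear_combination (σ p q * x (τ p) s * y s q) * hε2

end Matrix

namespace Pso

def partner (p : ℤ) : ℤ :=
  if p = 0 then 0
  else if 0 < p then (if p % 2 = 1 then p + 1 else p - 1)
  else (if p % 2 = 0 then p + 1 else p - 1)

def formCoeff (p : ℤ) : ℂ := if 0 < p ∧ p % 2 = 0 then -1 else 1

def pairSign (p q : ℤ) : ℂ := if (0 < p ∧ q ≠ 0) ∨ (0 < q ∧ p ≠ 0) then -1 else 1

def skewSign (p q : ℤ) : ℂ := -pairSign p q * formCoeff p * formCoeff q

lemma partner_partner (p : ℤ) : partner (partner p) = p := by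
  unfold partner; split_ifs <;> omega

lemma sign_partner (p : ℤ) : (partner p).sign = p.sign := by
  rcases lt_trichotomy p 0 with hp | rfl | hp
  · rw [Int.sign_eq_neg_one_of_neg hp,
      Int.sign_eq_neg_one_of_neg (by unfold partner; split_ifs <;> omega)]
  · rfl
  · rw [Int.sign_eq_one_of_pos hp, Int.sign_eq_one_of_pos (by unfold partner; split_ifs <;> omega)]

lemma sign_blockIdx (p : ℤ) : (blockIdx p).sign = p.sign := by
  rcases lt_trichotomy p 0 with hp | rfl | hp
  · rw [Int.sign_eq_neg_one_of_neg hp,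
      Int.sign_eq_neg_one_of_neg (by unfold blockIdx; split_ifs <;> omega)]
  · rfl
  · rw [Int.sign_eq_one_of_pos hp, Int.sign_eq_one_of_pos (by unfold blockIdx; split_ifs <;> omega)]

lemma blkdeg_congr {i i' j j' : ℤ} (hi : i.sign = i'.sign) (hj : j.sign = j'.sign) :
    blkdeg i j = blkdeg i' j' := by
  have pos {k k' : ℤ} (h : k.sign = k'.sign) : 0 < k ↔ 0 < k' := by
    rw [← Int.sign_eq_one_iff_pos, h, Int.sign_eq_one_iff_pos]
  have neg {k k' : ℤ} (h : k.sign = k'.sign) : k < 0 ↔ k' < 0 := by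
    rw [← Int.sign_eq_neg_one_iff_neg, h, Int.sign_eq_neg_one_iff_neg]
  have zero {k k' : ℤ} (h : k.sign = k'.sign) : k = 0 ↔ k' = 0 := by
    rw [← Int.sign_eq_zero_iff_zero, h, Int.sign_eq_zero_iff_zero]
  unfold blkdeg
  simp only [pos hi, neg hi, zero hi, pos hj, neg hj, zero hj]

lemma blkdeg_blockIdx (p q : ℤ) : blkdeg (blockIdx p) (blockIdx q) = blkdeg p q :=
  blkdeg_congr (sign_blockIdx p) (sign_blockIdx q)

lemma sgn_comm (a b : ZMod 2 × ZMod 2) : sgn a b = sgn b a := by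
  rw [sgn, sgn, mul_comm a.1, mul_comm a.2]

lemma sgn_mul_self (a b : ZMod 2 × ZMod 2) : sgn a b * sgn a b = 1 := by
  unfold sgn; split_ifs <;> norm_num

lemma formCoeff_mul_self (p : ℤ) : formCoeff p * formCoeff p = 1 := by
  unfold formCoeff; split_ifs <;> norm_num

lemma pairSign_mul_self (p q : ℤ) : pairSign p q * pairSign p q = 1 := by
  unfold pairSign; split_ifs <;> norm_num

lemma formCoeff_partner (p : ℤ) :
    formCoeff (partner p) = (if 0 < p then -1 else 1) * formCoeff p := by
  unfold formCoeff partner; split_ifs <;> first | (exfalso; omega) | norm_num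

lemma pairSign_partner_left (p q : ℤ) : pairSign (partner p) q = pairSign p q := by
  unfold pairSign partner; split_ifs <;> first | rfl | omega

lemma formCoeff_partner_eq_pairSign {p q : ℤ} (hp : p ≠ 0) (hpq : ¬(0 < p ∧ q < 0)) :
    formCoeff (partner q) = pairSign p q * formCoeff q := by
  rw [formCoeff_partner]; unfold pairSign; split_ifs <;> first | rfl | (exfalso; omega)

lemma skewSign_comm (p q : ℤ) : skewSign p q = skewSign q p := by
  unfold skewSign pairSign; split_ifs <;> first | (exfalso; omega) | ring

lemma skewSign_mul_self (p q : ℤ) : skewSign p q * skewSign p q = 1 := by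
  unfold skewSign
  linear_combination
    (formCoeff p * formCoeff p) * (formCoeff q * formCoeff q) * pairSign_mul_self p q
    + (formCoeff p * formCoeff p) * formCoeff_mul_self q + formCoeff_mul_self p

lemma pairSign_mul_pairSign (p s q : ℤ) :
    pairSign s q * pairSign p s * (if 0 < s then -1 else 1) =
      pairSign p q * sgn (blkdeg s q) (blkdeg p s) := by
  have h2 : (1 : ZMod 2) + 1 = 0 := rfl
  rcases lt_trichotomy p 0 with hp | hp | hp <;> rcases lt_trichotomy s 0 with hs | hs | hs <;>
    rcases lt_trichotomy q 0 with hq | hq | hq <;>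
    simp (disch := omega) [pairSign, blkdeg, sgn, if_pos, if_neg, h2]

lemma skewSign_partner_mul (p s q : ℤ) :
    skewSign (partner s) q * skewSign p s = -skewSign p q * sgn (blkdeg s q) (blkdeg p s) := by
  unfold skewSign
  rw [pairSign_partner_left, formCoeff_partner]
  linear_combination (formCoeff p * formCoeff q) * pairSign_mul_pairSign p s q
    + (pairSign s q * pairSign p s * (if 0 < s then -1 else 1) * formCoeff p * formCoeff q)
      * formCoeff_mul_self s

lemma pstart_add_pos_iff {i : ℤ} (hi : i ≠ 0) (α : Fin 2) : 0 < pstart i + α ↔ 0 < i := by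
  have := α.isLt; unfold pstart; split_ifs <;> omega

lemma pstart_add_neg_iff (i : ℤ) (α : Fin 2) : pstart i + α < 0 ↔ i < 0 := by
  have := α.isLt; unfold pstart; split_ifs <;> omega

lemma pstart_add_ne_zero {i : ℤ} (hi : i ≠ 0) (α : Fin 2) : pstart i + α ≠ 0 := by
  have := α.isLt; unfold pstart; split_ifs <;> omega

lemma partner_pstart_add {i : ℤ} (hi : i ≠ 0) (α : Fin 2) :
    partner (pstart i + α) = pstart i + (α.rev : ℕ) := by
  fin_cases α <;> simp only [Fin.rev, partner, pstart] <;> split_ifs <;> omega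

lemma formCoeff_pstart_add (i : ℤ) (α : Fin 2) :
    formCoeff (pstart i + α) = if 0 < i ∧ (α : ℕ) = 1 then -1 else 1 := by
  have := α.isLt
  unfold formCoeff pstart
  split_ifs <;> first | rfl | (exfalso; omega)

def formBlock (i : ℤ) : Matrix (Fin 2) (Fin 2) ℂ := if 0 < i then JM else IM

lemma formBlock_of_pos {i : ℤ} (hi : 0 < i) : formBlock i = JM := if_pos hi

lemma formBlock_neg_of_pos {i : ℤ} (hi : 0 < i) : formBlock (-i) = IM := if_neg (by omega)

lemma formBlock_apply (i : ℤ) (α β : Fin 2) :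
    formBlock i α β = if β = α.rev then formCoeff (pstart i + α) else 0 := by
  rw [formCoeff_pstart_add, formBlock]
  by_cases hi : 0 < i <;> fin_cases α <;> fin_cases β <;> simp [hi, JM, IM]

lemma formBlock_mul_apply {m : Type*} (i : ℤ) (M : Matrix (Fin 2) m ℂ)
    (α : Fin 2) (β : m) : (formBlock i * M) α β = formCoeff (pstart i + α) * M α.rev β := by
  rw [mul_apply, Fin.sum_univ_two, formBlock_apply, formBlock_apply]
  fin_cases α <;> simp

lemma transpose_mul_formBlock_apply {m : Type*} {j : ℤ} (hj : j ≠ 0) (N : Matrix (Fin 2) m ℂ)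
    (α : m) (β : Fin 2) :
    (Nᵀ * formBlock j) α β = formCoeff (partner (pstart j + β)) * N β.rev α := by
  rw [mul_apply, Fin.sum_univ_two, formBlock_apply, formBlock_apply, partner_pstart_add hj]
  fin_cases β <;> simp [mul_comm]

section

variable {n : ℕ} {Y : Matrix (Fin (4 * n + 1)) (Fin (4 * n + 1)) ℂ}

lemma abs_pstart_add_le {i : ℤ} (hi : i ≠ 0) (hin : |i| ≤ n) (α : Fin 2) :
    |pstart i + α| ≤ 2 * n := by
  have := α.isLt; rw [abs_le] at hin ⊢; unfold pstart; split_ifs <;> omega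

lemma exists_pstart_add_of_pos {p : ℤ} (hp : 0 < p) (hpn : p ≤ 2 * n) :
    ∃ i : ℤ, 1 ≤ i ∧ i ≤ n ∧ ∃ α : Fin 2, p = pstart i + α := by
  refine ⟨(p + 1) / 2, by omega, by omega, ?_⟩
  rcases Int.emod_two_eq p with h | h
  · exact ⟨1, by rw [pstart, if_pos (by omega), Fin.val_one, Nat.cast_one]; omega⟩
  · exact ⟨0, by rw [pstart, if_pos (by omega), Fin.val_zero, Nat.cast_zero]; omega⟩

lemma exists_pstart_neg_add_of_neg {p : ℤ} (hp : p < 0) (hpn : -(2 * n) ≤ p) :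
    ∃ i : ℤ, 1 ≤ i ∧ i ≤ n ∧ ∃ α : Fin 2, p = pstart (-i) + α := by
  refine ⟨(1 - p) / 2, by omega, by omega, ?_⟩
  rcases Int.emod_two_eq p with h | h
  · exact ⟨0, by rw [pstart, if_neg (by omega), Fin.val_zero, Nat.cast_zero]; omega⟩
  · exact ⟨1, by rw [pstart, if_neg (by omega), Fin.val_one, Nat.cast_one]; omega⟩

def posOf (n : ℕ) (r : Fin (4 * n + 1)) : ℤ := (r.val : ℤ) - 2 * n

lemma finOf_posOf (r : Fin (4 * n + 1)) : finOf n (posOf n r) = r := by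
  ext
  simp only [finOf, posOf]
  rw [show ((r.val : ℤ) - 2 * n + 2 * n).toNat = r.val by omega, Nat.mod_eq_of_lt r.isLt]

lemma posOf_finOf {p : ℤ} (hp : |p| ≤ 2 * n) : posOf n (finOf n p) = p := by
  rw [abs_le] at hp
  simp only [posOf, finOf]
  rw [Nat.mod_eq_of_lt (by omega)]
  omega

lemma abs_posOf_le (r : Fin (4 * n + 1)) : |posOf n r| ≤ 2 * n := by
  rw [abs_le, posOf]; omega

lemma abs_partner_le {p : ℤ} (hp : |p| ≤ 2 * n) : |partner p| ≤ 2 * n := by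
  rw [abs_le] at hp ⊢; unfold partner; split_ifs <;> omega

def partnerIdx (n : ℕ) (r : Fin (4 * n + 1)) : Fin (4 * n + 1) := finOf n (partner (posOf n r))

lemma posOf_partnerIdx (r : Fin (4 * n + 1)) :
    posOf n (partnerIdx n r) = partner (posOf n r) :=
  posOf_finOf (abs_partner_le (abs_posOf_le r))

lemma partnerIdx_involutive : Function.Involutive (partnerIdx n) := fun r => by
  rw [partnerIdx, posOf_partnerIdx, partner_partner, finOf_posOf]

lemma blkdeg_partnerIdx_left (r r' : Fin (4 * n + 1)) :
    blkdeg (blockIdx (posOf n (partnerIdx n r))) (blockIdx (posOf n r')) =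
      blkdeg (blockIdx (posOf n r)) (blockIdx (posOf n r')) := by
  rw [blkdeg_blockIdx, blkdeg_blockIdx, posOf_partnerIdx, blkdeg_congr (sign_partner _) rfl]

lemma skewSign_partnerIdx_mul (r s r' : Fin (4 * n + 1)) :
    skewSign (posOf n (partnerIdx n s)) (posOf n r') * skewSign (posOf n r) (posOf n s) =
      -skewSign (posOf n r) (posOf n r') *
        sgn (blkdeg (blockIdx (posOf n s)) (blockIdx (posOf n r')))
          (blkdeg (blockIdx (posOf n r)) (blockIdx (posOf n s))) := by
  rw [posOf_partnerIdx, blkdeg_blockIdx, blkdeg_blockIdx, skewSign_partner_mul]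

def SkewAt (n : ℕ) (Y : Matrix (Fin (4 * n + 1)) (Fin (4 * n + 1)) ℂ) (p q : ℤ) : Prop :=
  ent n Y (partner q) p = skewSign p q * ent n Y (partner p) q

lemma isSignedSkew_iff :
    IsSignedSkew (partnerIdx n) (fun r r' => skewSign (posOf n r) (posOf n r')) Y ↔
      ∀ p q : ℤ, |p| ≤ 2 * n → |q| ≤ 2 * n → SkewAt n Y p q := by
  constructor
  · intro h p q hp hq
    simpa [SkewAt, ent, partnerIdx, posOf_finOf hp, posOf_finOf hq] using h (finOf n p) (finOf n q)
  · intro h r r'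
    simpa [SkewAt, ent, partnerIdx, finOf_posOf] using h _ _ (abs_posOf_le r) (abs_posOf_le r')

lemma skewAt_iff_formCoeff {p q : ℤ} :
    SkewAt n Y p q ↔ formCoeff p * ent n Y (partner p) q
      + pairSign p q * formCoeff q * ent n Y (partner q) p = 0 := by
  have hq := formCoeff_mul_self q
  have hpq := pairSign_mul_self p q
  unfold SkewAt skewSign
  constructor <;> intro h
  · linear_combination (pairSign p q * formCoeff q) * h
      - (formCoeff p * ent n Y (partner p) q) * (hpq + pairSign p q * pairSign p q * hq)
  · linear_combination (pairSign p q * formCoeff q) * h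
      - ent n Y (partner q) p * (hpq + pairSign p q * pairSign p q * hq)

lemma skewAt_comm {p q : ℤ} (h : SkewAt n Y p q) : SkewAt n Y q p := by
  unfold SkewAt at h ⊢
  rw [h, ← mul_assoc, skewSign_comm q p, skewSign_mul_self, one_mul]

lemma skewAt_zero_zero_iff : SkewAt n Y 0 0 ↔ ent n Y 0 0 = 0 := by
  have h00 : skewSign 0 0 = -1 := by norm_num [skewSign, pairSign, formCoeff]
  rw [SkewAt, show partner 0 = 0 from rfl, h00]
  constructor <;> intro h
  · linear_combination h / 2
  · rw [h, mul_zero]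

lemma skewAt_zero_left_iff {q : ℤ} :
    SkewAt n Y 0 q ↔ ent n Y 0 q + formCoeff q * ent n Y (partner q) 0 = 0 := by
  rw [skewAt_iff_formCoeff]
  norm_num [formCoeff, pairSign, partner]

lemma blockCond_iff {i j : ℤ} (hi : i ≠ 0) (hj : j ≠ 0) (hij : ¬(0 < i ∧ j < 0)) :
    formBlock i * blk n Y i j + (blk n Y j i)ᵀ * formBlock j = 0 ↔
      ∀ α β : Fin 2, SkewAt n Y (pstart i + α) (pstart j + β) := by
  rw [← Matrix.ext_iff]
  refine forall₂_congr fun α β => ?_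
  rw [skewAt_iff_formCoeff, ← formCoeff_partner_eq_pairSign (pstart_add_ne_zero hi α)
    (by rwa [pstart_add_pos_iff hi, pstart_add_neg_iff])]
  rw [Matrix.add_apply, formBlock_mul_apply, transpose_mul_formBlock_apply hj, Matrix.zero_apply,
    partner_pstart_add hi, partner_pstart_add hj]
  rfl

lemma rowCond_neg_iff {j : ℤ} (hj : 0 < j) :
    blkRow n Y (-j) + (blkCol n Y (-j))ᵀ * IM = 0 ↔
      ∀ β : Fin 2, SkewAt n Y 0 (pstart (-j) + β) := by
  rw [← formBlock_neg_of_pos hj, ← Matrix.ext_iff, Unique.forall_iff]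
  refine forall_congr' fun β => ?_
  rw [skewAt_zero_left_iff, Matrix.add_apply, transpose_mul_formBlock_apply (by omega),
    formCoeff_partner, if_neg (by rw [pstart_add_pos_iff (by omega)]; omega)]
  simp [blkRow, blkCol, partner_pstart_add (show -j ≠ 0 by omega)]

lemma rowCond_pos_iff {j : ℤ} (hj : 0 < j) :
    blkRow n Y j - (blkCol n Y j)ᵀ * JM = 0 ↔ ∀ β : Fin 2, SkewAt n Y 0 (pstart j + β) := by
  rw [← formBlock_of_pos hj, ← Matrix.ext_iff, Unique.forall_iff]
  refine forall_congr' fun β => ?_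
  rw [skewAt_zero_left_iff, Matrix.sub_apply, transpose_mul_formBlock_apply hj.ne',
    formCoeff_partner, if_pos ((pstart_add_pos_iff hj.ne' β).mpr hj)]
  simp [blkRow, blkCol, partner_pstart_add hj.ne']

lemma skewAt_of_psoMem (h : psoMem n Y) {p q : ℤ} (hp : |p| ≤ 2 * n) (hq : |q| ≤ 2 * n)
    (hpq : p = 0 ∨ (p < 0 ∧ q ≠ 0) ∨ (0 < p ∧ 0 < q)) : SkewAt n Y p q := by
  obtain ⟨h00, hblk, hrow⟩ := h
  rw [abs_le] at hp hq
  rcases hpq with rfl | ⟨hp0, hq0⟩ | ⟨hp0, hq0⟩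
  · rcases lt_trichotomy q 0 with hq0 | rfl | hq0
    · obtain ⟨j, hj1, hjn, β, rfl⟩ := exists_pstart_neg_add_of_neg hq0 hq.1
      exact (rowCond_neg_iff hj1).mp (hrow j hj1 hjn).1 β
    · exact skewAt_zero_zero_iff.mpr h00
    · obtain ⟨j, hj1, hjn, β, rfl⟩ := exists_pstart_add_of_pos hq0 hq.2
      exact (rowCond_pos_iff hj1).mp (hrow j hj1 hjn).2 β
  · obtain ⟨i, hi1, hin, α, rfl⟩ := exists_pstart_neg_add_of_neg hp0 hp.1
    rcases hq0.lt_or_gt with hq0 | hq0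
    · obtain ⟨j, hj1, hjn, β, rfl⟩ := exists_pstart_neg_add_of_neg hq0 hq.1
      refine (blockCond_iff (by omega) (by omega) (by omega)).mp ?_ α β
      rw [formBlock_neg_of_pos hi1, formBlock_neg_of_pos hj1]
      exact (hblk i j hi1 hin hj1 hjn).1
    · obtain ⟨j, hj1, hjn, β, rfl⟩ := exists_pstart_add_of_pos hq0 hq.2
      refine (blockCond_iff (by omega) (by omega) (by omega)).mp ?_ α β
      rw [formBlock_neg_of_pos hi1, formBlock_of_pos hj1]
      exact (hblk i j hi1 hin hj1 hjn).2.2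
  · obtain ⟨i, hi1, hin, α, rfl⟩ := exists_pstart_add_of_pos hp0 hp.2
    obtain ⟨j, hj1, hjn, β, rfl⟩ := exists_pstart_add_of_pos hq0 hq.2
    refine (blockCond_iff (by omega) (by omega) (by omega)).mp ?_ α β
    rw [formBlock_of_pos hi1, formBlock_of_pos hj1]
    exact (hblk i j hi1 hin hj1 hjn).2.1

lemma psoMem_iff_forall_skewAt :
    psoMem n Y ↔ ∀ p q : ℤ, |p| ≤ 2 * n → |q| ≤ 2 * n → SkewAt n Y p q := by
  constructor
  · intro h p q hp hq
    by_cases hpq : p = 0 ∨ (p < 0 ∧ q ≠ 0) ∨ (0 < p ∧ 0 < q)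
    · exact skewAt_of_psoMem h hp hq hpq
    · exact skewAt_comm (skewAt_of_psoMem h hq hp (by omega))
  · intro h
    have hbd {i : ℤ} (hi1 : 1 ≤ i) (hin : i ≤ n) (α : Fin 2) :
        |pstart i + α| ≤ 2 * n ∧ |pstart (-i) + α| ≤ 2 * n :=
      ⟨abs_pstart_add_le (by omega) (by rw [abs_le]; omega) α,
        abs_pstart_add_le (by omega) (by rw [abs_le]; omega) α⟩
    refine ⟨skewAt_zero_zero_iff.mp (h 0 0 (by simp) (by simp)),
      fun i j hi1 hin hj1 hjn => ⟨?_, ?_, ?_⟩, fun j hj1 hjn => ⟨?_, ?_⟩⟩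
    · have := (blockCond_iff (Y := Y) (i := -i) (j := -j) (by omega) (by omega) (by omega)).mpr
        fun α β => h _ _ (hbd hi1 hin α).2 (hbd hj1 hjn β).2
      rwa [formBlock_neg_of_pos hi1, formBlock_neg_of_pos hj1] at this
    · have := (blockCond_iff (Y := Y) (i := i) (j := j) (by omega) (by omega) (by omega)).mpr
        fun α β => h _ _ (hbd hi1 hin α).1 (hbd hj1 hjn β).1
      rwa [formBlock_of_pos hi1, formBlock_of_pos hj1] at this
    · have := (blockCond_iff (Y := Y) (i := -i) (j := j) (by omega) (by omega) (by omega)).mpr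
        fun α β => h _ _ (hbd hi1 hin α).2 (hbd hj1 hjn β).1
      rwa [formBlock_neg_of_pos hi1, formBlock_of_pos hj1] at this
    · exact (rowCond_neg_iff hj1).mpr fun β => h _ _ (by simp) (hbd hj1 hjn β).2
    · exact (rowCond_pos_iff hj1).mpr fun β => h _ _ (by simp) (hbd hj1 hjn β).1

end

end Pso

/-- `pso(2n+1|2n)` is closed under the graded bracket: for homogeneous
`x, y` of degrees `a, b` satisfying the defining block conditions, `⟦x,y⟧` again
satisfies them. -/
theorem pso_closed_under_bracket (n : ℕ) (a b : ZMod 2 × ZMod 2)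
    (x y : Matrix (Fin (4 * n + 1)) (Fin (4 * n + 1)) ℂ)
    (hx : psoMem n x) (hy : psoMem n y) (hxa : homog n a x) (hyb : homog n b y) :
    psoMem n (gbr n a b x y) := by
  rw [Pso.psoMem_iff_forall_skewAt, ← Pso.isSignedSkew_iff] at hx hy ⊢
  exact hx.sub_smul_mul Pso.partnerIdx_involutive Pso.blkdeg_partnerIdx_left
    Pso.skewSign_partnerIdx_mul (Pso.sgn_comm b a) (Pso.sgn_mul_self a b) hy hxa hyb

end
end

section
/- The parafermion generators f̄₋ᵢ^± = √2(e_{−2i,0} − e_{0,−2i+1}) and √2(e_{0,−2i} − e_{−2i+1,0}) satisfy the parafermion triple relations [[f̄_j^ξ, f̄_k^η], f̄_l^ε] = |ε−η| δ_{kl} f̄_j^ξ − |ε−ξ| δ_{jl} f̄_k^η for all j,k,l ∈ {1,…,n} and signs ξ,η,ε ∈ {+1,−1}. -/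
/-!
Write `G(x, y) = e_{x,0} - e_{0,y}` for positions `x, y ≠ 0`, so that `f̄_i^+ = √2 G(-2i, -2i+1)`
and `f̄_i^- = -√2 G(-2i+1, -2i)`, i.e. `f̄_i^ξ = ξ√2 G(x_i^ξ, y_i^ξ)`. Multiplying matrix units,
`[G(x, y), G(x', y')] = e_{x',y} - e_{x,y'}`, the two `e_{0,0}` terms cancelling as soon as
`y = x' ↔ y' = x`; one more bracket gives `[y = x''] G(x', y') - [y' = x''] G(x, y)`.
For the generators `y_j^ξ = x_l^ε` exactly when `j = l` and `ξ ≠ ε`; then `ξε = -1`, which turns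
the scalar `ξηε (√2)³` into `-|ε - ξ| η√2`.
-/

noncomputable section

/-- The matrix unit `e_{ij}` with rows and columns indexed by positions `−2n,…,2n`
(realized as `Fin (4n+1)` shifted by `2n`). -/
def eM (n : ℕ) (i j : ℤ) : Matrix (Fin (4 * n + 1)) (Fin (4 * n + 1)) ℂ :=
  Matrix.of fun a b => if (a.val : ℤ) = i + 2 * n ∧ (b.val : ℤ) = j + 2 * n then 1 else 0

/-- `√2` as a complex number. -/
def sq2 : ℂ := Real.sqrt 2

/-- The parafermion generator `f̄₋ᵢ^ξ`:
`f̄₋ᵢ^+ = √2(e_{−2i,0} − e_{0,−2i+1})`, `f̄₋ᵢ^− = √2(e_{0,−2i} − e_{−2i+1,0})`. -/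
def fbar (n : ℕ) (i ξ : ℤ) : Matrix (Fin (4 * n + 1)) (Fin (4 * n + 1)) ℂ :=
  if ξ = 1 then sq2 • (eM n (-2 * i) 0 - eM n 0 (-2 * i + 1))
  else sq2 • (eM n 0 (-2 * i) - eM n (-2 * i + 1) 0)

/-- Commutator. -/
def cbr {α : Type*} [Ring α] (x y : α) : α := x * y - y * x

open Matrix

namespace Parafermion

theorem sub_cbr {A : Type*} [Ring A] (a b c : A) : cbr (a - b) c = cbr a c - cbr b c := by
  simp only [cbr, sub_mul, mul_sub]
  abel

theorem cbr_smul_smul {R A : Type*} [CommRing R] [Ring A] [Algebra R A] (a b : R) (x y : A) :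
    cbr (a • x) (b • y) = (a * b) • cbr x y := by
  simp only [cbr, smul_mul_smul_comm, mul_comm b a, smul_sub]

section OddGenerator

variable {ι R : Type*} [DecidableEq ι] [Fintype ι] [Ring R]

theorem single_one_mul_single_one (a b c d : ι) :
    (single a b 1 : Matrix ι ι R) * single c d 1 = if b = c then single a d 1 else 0 := by
  split_ifs with h
  · rw [h, single_mul_single_same, one_mul]
  · exact single_mul_single_of_ne (h := h) ..

def oddGen (o x y : ι) : Matrix ι ι R := single x o 1 - single o y 1

theorem cbr_single_oddGen {o a b : ι} (ha : a ≠ o) (hb : b ≠ o) (x y : ι) :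
    cbr (single a b 1 : Matrix ι ι R) (oddGen o x y) =
      (if b = x then single a o 1 else 0) + (if y = a then single o b 1 else 0) := by
  simp only [cbr, oddGen, mul_sub, sub_mul, single_one_mul_single_one, if_neg hb,
    if_neg ha.symm]
  abel

theorem cbr_oddGen_oddGen {o x y x' y' : ι} (hx : x ≠ o) (hy : y ≠ o) (hx' : x' ≠ o)
    (hy' : y' ≠ o) (hcompat : y = x' ↔ y' = x) :
    cbr (oddGen o x y : Matrix ι ι R) (oddGen o x' y') = single x' y 1 - single x y' 1 := by
  simp only [cbr, oddGen, mul_sub, sub_mul, single_one_mul_single_one, if_neg hy,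
    if_neg hx'.symm, if_neg hx.symm, if_neg hy', ↓reduceIte]
  by_cases h : y = x'
  · rw [if_pos h, if_pos (hcompat.mp h)]
    abel
  · rw [if_neg h, if_neg (mt hcompat.mpr h)]
    abel

theorem cbr_cbr_oddGen {α : Type*} {o : ι} {x y : α → ι} (hx : ∀ a, x a ≠ o)
    (hy : ∀ a, y a ≠ o) (hcompat : ∀ a b, y a = x b ↔ y b = x a) (a b c : α) :
    cbr (cbr (oddGen o (x a) (y a) : Matrix ι ι R) (oddGen o (x b) (y b)))
        (oddGen o (x c) (y c)) =
      (if y a = x c then oddGen o (x b) (y b) else 0)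
        - (if y b = x c then oddGen o (x a) (y a) else 0) := by
  rw [cbr_oddGen_oddGen (hx a) (hy a) (hx b) (hy b) (hcompat a b), sub_cbr,
    cbr_single_oddGen (hx b) (hy a), cbr_single_oddGen (hx a) (hy b)]
  simp only [hcompat c b, hcompat c a]
  unfold oddGen
  split_ifs <;> abel

end OddGenerator

/-- Clamped to `Fin (4n+1)` so that it is total; it is the position of `a` when `|a| ≤ 2n`. -/
def site (n : ℕ) (a : ℤ) : Fin (4 * n + 1) := ⟨min (a + 2 * n).toNat (4 * n), by omega⟩

theorem site_val {n : ℕ} {a : ℤ} (ha : -(2 * n : ℤ) ≤ a) (ha' : a ≤ 2 * n) :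
    ((site n a : ℕ) : ℤ) = a + 2 * n := by
  simp only [site]
  omega

theorem eM_eq_single {n : ℕ} {a b : ℤ} (ha : -(2 * n : ℤ) ≤ a) (ha' : a ≤ 2 * n)
    (hb : -(2 * n : ℤ) ≤ b) (hb' : b ≤ 2 * n) :
    eM n a b = single (site n a) (site n b) 1 := by
  ext x y
  simp only [eM, single, of_apply, Fin.ext_iff, ← Int.natCast_inj, site_val ha ha', site_val hb hb',
    eq_comm]

theorem site_inj {n : ℕ} {a b : ℤ} (ha : -(2 * n : ℤ) ≤ a) (ha' : a ≤ 2 * n)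
    (hb : -(2 * n : ℤ) ≤ b) (hb' : b ≤ 2 * n) : site n a = site n b ↔ a = b := by
  rw [Fin.ext_iff, ← Int.natCast_inj, site_val ha ha', site_val hb hb', add_left_inj]

/-- For the generator `f̄_i^ξ = ξ √2 (e_{x,0} - e_{0,y})`, `headIdx` is the position of `x`
and `tailIdx` that of `y`. -/
def headIdx (n : ℕ) (a : Set.Icc (1 : ℤ) n × ℤˣ) : Fin (4 * n + 1) :=
  site n (if a.2 = 1 then -2 * a.1 else -2 * a.1 + 1)

def tailIdx (n : ℕ) (a : Set.Icc (1 : ℤ) n × ℤˣ) : Fin (4 * n + 1) :=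
  site n (if a.2 = 1 then -2 * a.1 + 1 else -2 * a.1)

theorem headIdx_ne_site_zero {n : ℕ} (a : Set.Icc (1 : ℤ) n × ℤˣ) : headIdx n a ≠ site n 0 := by
  obtain ⟨⟨i, hi, hin⟩, ξ⟩ := a
  dsimp only [headIdx]
  split_ifs <;> rw [Ne, site_inj (by omega) (by omega) (by omega) (by omega)] <;> omega

theorem tailIdx_ne_site_zero {n : ℕ} (a : Set.Icc (1 : ℤ) n × ℤˣ) : tailIdx n a ≠ site n 0 := by
  obtain ⟨⟨i, hi, hin⟩, ξ⟩ := a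
  dsimp only [tailIdx]
  split_ifs <;> rw [Ne, site_inj (by omega) (by omega) (by omega) (by omega)] <;> omega

theorem tailIdx_eq_headIdx_iff {n : ℕ} (a b : Set.Icc (1 : ℤ) n × ℤˣ) :
    tailIdx n a = headIdx n b ↔ (a.1 : ℤ) = b.1 ∧ a.2 ≠ b.2 := by
  obtain ⟨⟨i, hi, hin⟩, ξ⟩ := a
  obtain ⟨⟨l, hl, hln⟩, ε⟩ := b
  dsimp only [tailIdx, headIdx]
  rcases Int.units_eq_one_or ξ with rfl | rfl <;> rcases Int.units_eq_one_or ε with rfl | rfl <;>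
    simp only [↓reduceIte, ne_eq, Units.ext_iff, Units.val_neg, Units.val_one, Int.reduceEq] <;>
    rw [site_inj (by omega) (by omega) (by omega) (by omega)] <;> grind

theorem fbar_eq {n : ℕ} {i : ℤ} (hi : 1 ≤ i) (hin : i ≤ n) (ξ : ℤˣ) :
    fbar n i ξ = (((ξ : ℤ) : ℂ) * sq2) •
      oddGen (site n 0) (headIdx n (⟨i, hi, hin⟩, ξ)) (tailIdx n (⟨i, hi, hin⟩, ξ)) := by
  rcases Int.units_eq_one_or ξ with rfl | rfl
  · simp only [fbar, headIdx, tailIdx, oddGen, ↓reduceIte, Units.val_one, Int.cast_one, one_mul]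
    rw [eM_eq_single (by omega) (by omega) (by omega) (by omega),
      eM_eq_single (by omega) (by omega) (by omega) (by omega)]
  · simp only [fbar, headIdx, tailIdx, oddGen, ↓reduceIte, Units.ext_iff, Units.val_neg,
      Units.val_one, Int.reduceEq, Int.cast_neg, Int.cast_one, neg_one_mul, neg_smul, smul_sub]
    rw [eM_eq_single (by omega) (by omega) (by omega) (by omega),
      eM_eq_single (by omega) (by omega) (by omega) (by omega)]
    abel

theorem tailIdx_eq_headIdx_comm {n : ℕ} (a b : Set.Icc (1 : ℤ) n × ℤˣ) :
    tailIdx n a = headIdx n b ↔ tailIdx n b = headIdx n a := by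
  rw [tailIdx_eq_headIdx_iff, tailIdx_eq_headIdx_iff, eq_comm, ne_comm]

theorem sq2_mul_sq2 : sq2 * sq2 = 2 := by
  rw [sq2, ← Complex.ofReal_mul, Real.mul_self_sqrt zero_le_two, Complex.ofReal_ofNat]

theorem sign_mul_sign_smul_ite {M : Type*} [AddCommGroup M] [Module ℂ M] (ζ ε : ℤˣ) (P : Prop)
    [Decidable P] (m : M) :
    (((ζ : ℤ) : ℂ) * sq2 * (((ε : ℤ) : ℂ) * sq2)) • (if P ∧ ζ ≠ ε then m else 0) =
      -((((|(ε : ℤ) - ζ|) : ℤ) : ℂ) • (if P then (1 : ℂ) else 0) • m) := by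
  rcases Int.units_eq_one_or ζ with rfl | rfl <;> rcases Int.units_eq_one_or ε with rfl | rfl <;>
    by_cases hP : P <;> simp [hP, sq2_mul_sq2]

end Parafermion

open Parafermion in
/-- the parafermion triple relations
`[[f̄_j^ξ, f̄_k^η], f̄_l^ε] = |ε−η| δ_{kl} f̄_j^ξ − |ε−ξ| δ_{jl} f̄_k^η`
for `j,k,l ∈ {1,…,n}` and `ξ,η,ε ∈ {+1,−1}`. -/
theorem parafermion_triple_relations (n : ℕ) (j k l ξ η ε : ℤ)
    (hj : 1 ≤ j) (hjn : j ≤ n) (hk : 1 ≤ k) (hkn : k ≤ n) (hl : 1 ≤ l) (hln : l ≤ n)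
    (hξ : ξ = 1 ∨ ξ = -1) (hη : η = 1 ∨ η = -1) (hε : ε = 1 ∨ ε = -1) :
    cbr (cbr (fbar n j ξ) (fbar n k η)) (fbar n l ε) =
      ((|ε - η| : ℤ) : ℂ) • (if k = l then (1 : ℂ) else 0) • fbar n j ξ
        - ((|ε - ξ| : ℤ) : ℂ) • (if j = l then (1 : ℂ) else 0) • fbar n k η := by
  obtain ⟨ξ, rfl⟩ := Int.isUnit_iff.mpr hξ
  obtain ⟨η, rfl⟩ := Int.isUnit_iff.mpr hη
  obtain ⟨ε, rfl⟩ := Int.isUnit_iff.mpr hε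
  rw [fbar_eq hj hjn, fbar_eq hk hkn, fbar_eq hl hln, cbr_smul_smul, cbr_smul_smul,
    cbr_cbr_oddGen headIdx_ne_site_zero tailIdx_ne_site_zero tailIdx_eq_headIdx_comm]
  simp only [tailIdx_eq_headIdx_iff]
  have hterm_k := sign_mul_sign_smul_ite ξ ε (j = l)
    (oddGen (R := ℂ) (site n 0) (headIdx n (⟨k, hk, hkn⟩, η)) (tailIdx n (⟨k, hk, hkn⟩, η)))
  have hterm_j := sign_mul_sign_smul_ite η ε (k = l)
    (oddGen (R := ℂ) (site n 0) (headIdx n (⟨j, hj, hjn⟩, ξ)) (tailIdx n (⟨j, hj, hjn⟩, ξ)))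
  linear_combination (norm := module)
    (((η : ℤ) : ℂ) * sq2) • hterm_k - (((ξ : ℤ) : ℂ) * sq2) • hterm_j

end
end

section
/- The paraboson generators b̄ᵢ^+ = √2(e_{0,2i} + e_{2i−1,0}) and b̄ᵢ^− = √2(e_{0,2i−1} − e_{2i,0}) satisfy the paraboson triple relations [{b̄_j^ξ, b̄_k^η}, b̄_l^ε] = (ε−ξ) δ_{jl} b̄_k^η + (ε−η) δ_{kl} b̄_j^ξ for all j,k,l ∈ {1,…,n} and ξ,η,ε ∈ {+1,−1}. -/
noncomputable section

/-- The paraboson generator `b̄ᵢ^ξ`: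
`b̄ᵢ^+ = √2(e_{0,2i} + e_{2i−1,0})`, `b̄ᵢ^− = √2(e_{0,2i−1} − e_{2i,0})`. -/
def bbar (n : ℕ) (i ξ : ℤ) : Matrix (Fin (4 * n + 1)) (Fin (4 * n + 1)) ℂ :=
  if ξ = 1 then sq2 • (eM n 0 (2 * i) + eM n (2 * i - 1) 0)
  else sq2 • (eM n 0 (2 * i - 1) - eM n (2 * i) 0)

/-- Anticommutator `{x,y} = xy + yx`. -/
def abr {α : Type*} [Ring α] (x y : α) : α := x * y + y * x

/-!
Each generator is a hook matrix `e rᵀ + c eᵀ`, where `e` is the unit vector at the central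
position `0` and `r`, `c` vanish there. A triple product of hook matrices collapses to
`x y z = ⟨r_x, c_y⟩ e r_zᵀ + ⟨r_y, c_z⟩ c_x eᵀ`, so `[{x, y}, z]` is governed by the pairing
`⟨r_x, c_y⟩`. For the paraboson generators this pairing is `δ_{jk} (η − ξ)`, which is
antisymmetric, and antisymmetry alone gives `[{x, y}, z] = ⟨r_x, c_z⟩ y + ⟨r_y, c_z⟩ x`.
-/

open Matrix

section Hook

variable {ι R : Type*} [Fintype ι] [CommRing R] {e r₁ c₁ r₂ c₂ r₃ c₃ : ι → R}

def hookMatrix (e r c : ι → R) : Matrix ι ι R := vecMulVec e r + vecMulVec c e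

lemma hookMatrix_mul_hookMatrix (he : e ⬝ᵥ e = 1) (hr₁ : r₁ ⬝ᵥ e = 0) (hc₂ : e ⬝ᵥ c₂ = 0) :
    hookMatrix e r₁ c₁ * hookMatrix e r₂ c₂ = vecMulVec c₁ r₂ + (r₁ ⬝ᵥ c₂) • vecMulVec e e := by
  simp only [hookMatrix, add_mul, mul_add, vecMulVec_mul_vecMulVec, he, hr₁, hc₂, zero_smul,
    one_smul, vecMulVec_zero, vecMulVec_smul, add_zero, zero_add]

lemma hookMatrix_mul_hookMatrix_mul_hookMatrix (he : e ⬝ᵥ e = 1) (hr₁ : r₁ ⬝ᵥ e = 0)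
    (hr₂ : r₂ ⬝ᵥ e = 0) (hc₂ : e ⬝ᵥ c₂ = 0) (hc₃ : e ⬝ᵥ c₃ = 0) :
    hookMatrix e r₁ c₁ * hookMatrix e r₂ c₂ * hookMatrix e r₃ c₃ =
      (r₁ ⬝ᵥ c₂) • vecMulVec e r₃ + (r₂ ⬝ᵥ c₃) • vecMulVec c₁ e := by
  rw [hookMatrix_mul_hookMatrix he hr₁ hc₂]
  simp only [hookMatrix, add_mul, mul_add, smul_mul, vecMulVec_mul_vecMulVec, he, hr₂, hc₃,
    zero_smul, one_smul, vecMulVec_zero, vecMulVec_smul, add_zero, zero_add, smul_zero]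

lemma cbr_abr_hookMatrix [DecidableEq ι] (he : e ⬝ᵥ e = 1) (hr₁ : r₁ ⬝ᵥ e = 0)
    (hr₂ : r₂ ⬝ᵥ e = 0) (hr₃ : r₃ ⬝ᵥ e = 0) (hc₁ : e ⬝ᵥ c₁ = 0) (hc₂ : e ⬝ᵥ c₂ = 0)
    (hc₃ : e ⬝ᵥ c₃ = 0)
    (h₂₁ : r₂ ⬝ᵥ c₁ = -(r₁ ⬝ᵥ c₂)) (h₃₁ : r₃ ⬝ᵥ c₁ = -(r₁ ⬝ᵥ c₃))
    (h₃₂ : r₃ ⬝ᵥ c₂ = -(r₂ ⬝ᵥ c₃)) :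
    cbr (abr (hookMatrix e r₁ c₁) (hookMatrix e r₂ c₂)) (hookMatrix e r₃ c₃) =
      (r₁ ⬝ᵥ c₃) • hookMatrix e r₂ c₂ + (r₂ ⬝ᵥ c₃) • hookMatrix e r₁ c₁ := by
  simp only [cbr, abr, add_mul, mul_add, ← mul_assoc,
    hookMatrix_mul_hookMatrix_mul_hookMatrix he, hr₁, hr₂, hr₃, hc₁, hc₂, hc₃, h₂₁, h₃₁, h₃₂]
  simp only [hookMatrix]
  module

end Hook

def unitVec (n : ℕ) (i : ℤ) : Fin (4 * n + 1) → ℂ :=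
  fun a => if (a.val : ℤ) = i + 2 * n then 1 else 0

lemma eM_eq_vecMulVec (n : ℕ) (i j : ℤ) : eM n i j = vecMulVec (unitVec n i) (unitVec n j) := by
  ext a b
  simp only [eM, of_apply, vecMulVec_apply, unitVec, ite_zero_mul_ite_zero, mul_one]

lemma unitVec_dotProduct_unitVec {n : ℕ} {i : ℤ} (hi : -(2 * n : ℤ) ≤ i) (hi' : i ≤ 2 * n)
    (j : ℤ) : unitVec n i ⬝ᵥ unitVec n j = if i = j then 1 else 0 := by
  have hsingle : unitVec n i = Pi.single ⟨(i + 2 * n).toNat, by omega⟩ 1 := by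
    funext a
    simp only [unitVec, Pi.single_apply, Fin.ext_iff]
    congr 1
    exact propext (by omega)
  rw [hsingle, single_dotProduct, one_mul]
  simp only [unitVec]
  congr 1
  exact propext (by omega)

lemma sq2_mul_sq2 : sq2 * sq2 = 2 := by
  simp [sq2, ← Complex.ofReal_mul, Real.mul_self_sqrt]

def bbarRow (n : ℕ) (i ξ : ℤ) : Fin (4 * n + 1) → ℂ :=
  if ξ = 1 then sq2 • unitVec n (2 * i) else sq2 • unitVec n (2 * i - 1)

def bbarCol (n : ℕ) (i ξ : ℤ) : Fin (4 * n + 1) → ℂ :=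
  if ξ = 1 then sq2 • unitVec n (2 * i - 1) else -(sq2 • unitVec n (2 * i))

lemma bbar_eq_hookMatrix (n : ℕ) (i ξ : ℤ) :
    bbar n i ξ = hookMatrix (unitVec n 0) (bbarRow n i ξ) (bbarCol n i ξ) := by
  unfold bbar bbarRow bbarCol hookMatrix
  split_ifs <;>
    simp only [eM_eq_vecMulVec, smul_add, vecMulVec_smul, smul_vecMulVec,
      neg_vecMulVec, sub_eq_add_neg, smul_neg]

lemma unitVec_zero_dotProduct_unitVec_zero (n : ℕ) : unitVec n 0 ⬝ᵥ unitVec n 0 = 1 := by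
  rw [unitVec_dotProduct_unitVec (by omega) (by omega), if_pos rfl]

lemma bbarRow_dotProduct_unitVec_zero {n : ℕ} {i : ℤ} (hi : 1 ≤ i) (ξ : ℤ) :
    bbarRow n i ξ ⬝ᵥ unitVec n 0 = 0 := by
  unfold bbarRow
  rw [dotProduct_comm]
  split_ifs <;>
    simp only [dotProduct_smul,
      unitVec_dotProduct_unitVec (n := n) (i := 0) (by omega) (by omega)] <;>
    rw [if_neg (by omega), smul_zero]

lemma unitVec_zero_dotProduct_bbarCol {n : ℕ} {i : ℤ} (hi : 1 ≤ i) (ξ : ℤ) :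
    unitVec n 0 ⬝ᵥ bbarCol n i ξ = 0 := by
  unfold bbarCol
  split_ifs <;>
    simp only [dotProduct_smul, dotProduct_neg,
      unitVec_dotProduct_unitVec (n := n) (i := 0) (by omega) (by omega)] <;>
    rw [if_neg (by omega)] <;> simp

lemma bbarRow_dotProduct_bbarCol {n : ℕ} {i : ℤ} (hi : 1 ≤ i) (hin : i ≤ n) (j : ℤ) {ξ η : ℤ}
    (hξ : ξ = 1 ∨ ξ = -1) (hη : η = 1 ∨ η = -1) :
    bbarRow n i ξ ⬝ᵥ bbarCol n j η = ((η - ξ : ℤ) : ℂ) * if i = j then 1 else 0 := by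
  have h₀ := unitVec_dotProduct_unitVec (n := n) (i := 2 * i) (by omega) (by omega)
  have h₁ := unitVec_dotProduct_unitVec (n := n) (i := 2 * i - 1) (by omega) (by omega)
  have h₀₀ : 2 * i = 2 * j ↔ i = j := by omega
  have h₁₁ : 2 * i - 1 = 2 * j - 1 ↔ i = j := by omega
  have h₀₁ : 2 * i ≠ 2 * j - 1 := by omega
  have h₁₀ : 2 * i - 1 ≠ 2 * j := by omega
  rcases hξ with rfl | rfl <;> rcases hη with rfl | rfl <;>
    simp [bbarRow, bbarCol, h₀, h₁, h₀₀, h₁₁, h₀₁, h₁₀, smul_eq_mul, sq2_mul_sq2, neg_ite]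

lemma bbarRow_dotProduct_bbarCol_swap {n : ℕ} {i j : ℤ} (hi : 1 ≤ i) (hin : i ≤ n) (hj : 1 ≤ j)
    (hjn : j ≤ n) {ξ η : ℤ} (hξ : ξ = 1 ∨ ξ = -1) (hη : η = 1 ∨ η = -1) :
    bbarRow n j η ⬝ᵥ bbarCol n i ξ = -(bbarRow n i ξ ⬝ᵥ bbarCol n j η) := by
  rw [bbarRow_dotProduct_bbarCol hj hjn i hη hξ, bbarRow_dotProduct_bbarCol hi hin j hξ hη]
  rcases eq_or_ne i j with rfl | hij
  · push_cast
    ring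
  · simp [hij, hij.symm]

/-- the paraboson triple relations
`[{b̄_j^ξ, b̄_k^η}, b̄_l^ε] = (ε−ξ) δ_{jl} b̄_k^η + (ε−η) δ_{kl} b̄_j^ξ`
for `j,k,l ∈ {1,…,n}` and `ξ,η,ε ∈ {+1,−1}`. -/
theorem paraboson_triple_relations (n : ℕ) (j k l ξ η ε : ℤ)
    (hj : 1 ≤ j) (hjn : j ≤ n) (hk : 1 ≤ k) (hkn : k ≤ n) (hl : 1 ≤ l) (hln : l ≤ n)
    (hξ : ξ = 1 ∨ ξ = -1) (hη : η = 1 ∨ η = -1) (hε : ε = 1 ∨ ε = -1) :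
    cbr (abr (bbar n j ξ) (bbar n k η)) (bbar n l ε) =
      ((ε - ξ : ℤ) : ℂ) • (if j = l then (1 : ℂ) else 0) • bbar n k η
        + ((ε - η : ℤ) : ℂ) • (if k = l then (1 : ℂ) else 0) • bbar n j ξ := by
  simp only [bbar_eq_hookMatrix]
  rw [cbr_abr_hookMatrix (unitVec_zero_dotProduct_unitVec_zero n)
      (bbarRow_dotProduct_unitVec_zero hj ξ) (bbarRow_dotProduct_unitVec_zero hk η)
      (bbarRow_dotProduct_unitVec_zero hl ε) (unitVec_zero_dotProduct_bbarCol hj ξ)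
      (unitVec_zero_dotProduct_bbarCol hk η) (unitVec_zero_dotProduct_bbarCol hl ε)
      (bbarRow_dotProduct_bbarCol_swap hj hjn hk hkn hξ hη)
      (bbarRow_dotProduct_bbarCol_swap hj hjn hl hln hξ hε)
      (bbarRow_dotProduct_bbarCol_swap hk hkn hl hln hη hε),
    bbarRow_dotProduct_bbarCol hj hjn l hξ hε, bbarRow_dotProduct_bbarCol hk hkn l hη hε,
    smul_smul, smul_smul]

end
end

section
/- The set of infinite square matrices Y = (Y_{ij})_{i,j∈ℤ} with only finitely many nonzero entries, Y_{00} = 0, and blocks satisfying I Y_{−i,−j} + Y_{−j,−i}^T I = 0, J Y_{ij} + Y_{ji}^T J = 0, I Y_{−i,j} + Y_{j,−i}^T J = 0 (i,j ≥ 1) and Y_{0,−j} + Y_{−j,0}^T I = 0, Y_{0,j} − Y_{j,0}^T J = 0 (j ≥ 0), forms a Z₂×Z₂-graded Lie superalgebra under the bracket ⟦x,y⟧ = xy − (−1)^{a·b} yx: it is closed under the bracket, and the bracket satisfies graded antisymmetry and the graded Jacobi identity. -/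
open Matrix

noncomputable section

/-- Multiplication of infinite `ℤ×ℤ` matrices (well defined on finitely supported ones). -/
def imul (x y : ℤ → ℤ → ℂ) : ℤ → ℤ → ℂ := fun p q => ∑ᶠ r, x p r * y r q

/-- The graded bracket `⟦x,y⟧ = xy − (−1)^{a·b} yx`. -/
def gbrI (a b : ZMod 2 × ZMod 2) (x y : ℤ → ℤ → ℂ) : ℤ → ℤ → ℂ :=
  imul x y - sgn a b • imul y x

/-- The 2×2 block `Y_{ij}` (`i, j ≠ 0`). -/
def blkI (Y : ℤ → ℤ → ℂ) (i j : ℤ) : Matrix (Fin 2) (Fin 2) ℂ :=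
  Matrix.of fun a b => Y (pstart i + (a.val : ℤ)) (pstart j + (b.val : ℤ))

/-- The 1×2 block `Y_{0,j}` (`j ≠ 0`). -/
def rowI (Y : ℤ → ℤ → ℂ) (j : ℤ) : Matrix (Fin 1) (Fin 2) ℂ :=
  Matrix.of fun _ b => Y 0 (pstart j + (b.val : ℤ))

/-- The 2×1 block `Y_{j,0}` (`j ≠ 0`). -/
def colI (Y : ℤ → ℤ → ℂ) (j : ℤ) : Matrix (Fin 2) (Fin 1) ℂ :=
  Matrix.of fun a _ => Y (pstart j + (a.val : ℤ)) 0

/-- Membership in `pso(∞|∞)`: finitely many nonzero entries, `Y₀₀ = 0`, and the block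
conditions `I Y_{−i,−j} + Y_{−j,−i}ᵀ I = 0`, `J Y_{ij} + Y_{ji}ᵀ J = 0`,
`I Y_{−i,j} + Y_{j,−i}ᵀ J = 0` (`i, j ≥ 1`), `Y_{0,−j} + Y_{−j,0}ᵀ I = 0`,
`Y_{0,j} − Y_{j,0}ᵀ J = 0` (`j ≥ 1`; the case `j = 0` being `Y₀₀ = 0`). -/
def psoInf (Y : ℤ → ℤ → ℂ) : Prop :=
  {pq : ℤ × ℤ | Y pq.1 pq.2 ≠ 0}.Finite ∧
  Y 0 0 = 0 ∧
  (∀ i j : ℤ, 1 ≤ i → 1 ≤ j →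
    IM * blkI Y (-i) (-j) + (blkI Y (-j) (-i))ᵀ * IM = 0 ∧
    JM * blkI Y i j + (blkI Y j i)ᵀ * JM = 0 ∧
    IM * blkI Y (-i) j + (blkI Y j (-i))ᵀ * JM = 0) ∧
  (∀ j : ℤ, 1 ≤ j →
    rowI Y (-j) + (colI Y (-j))ᵀ * IM = 0 ∧
    rowI Y j - (colI Y j)ᵀ * JM = 0)

/-- Homogeneity of degree `d` for infinite matrices. -/
def homogI (d : ZMod 2 × ZMod 2) (Y : ℤ → ℤ → ℂ) : Prop :=
  ∀ p q : ℤ, blkdeg (blockIdx p) (blockIdx q) ≠ d → Y p q = 0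

/-!
Besides finite support, the conditions defining `psoInf` say exactly that `Y` is fixed by the
involution `(twist Y) p q = c p q * Y (σ q) (σ p)`, where `σ = blockSwap` exchanges the two
positions of each 2×2 block and the sign `c = twistSign` is read off from `I` and `J`. These signs
satisfy `c p r * c r q = -(-1)^{d(p,r)·d(r,q)} c p q`, with `d` the degree of a position pair, so
for homogeneous `x`, `y` of degrees `a`, `b` one gets `twist (x y) = -(-1)^{a·b} twist y * twist x`.
Hence `twist` commutes with the graded bracket and its fixed points are closed under it.
Graded antisymmetry and the graded Jacobi identity only use that multiplication of finitely
supported matrices is bilinear and associative.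
-/

def chi (t : ZMod 2) : ℂ := if t = 0 then 1 else -1

lemma chi_add (s t : ZMod 2) : chi (s + t) = chi s * chi t := by
  have h01 : ∀ u : ZMod 2, u = 0 ∨ u = 1 := by decide
  rcases h01 s with rfl | rfl <;> rcases h01 t with rfl | rfl <;>
    simp [chi, show (1 : ZMod 2) + 1 = 0 from rfl]

lemma chi_mul_self (t : ZMod 2) : chi t * chi t = 1 := by
  rw [← chi_add, CharTwo.add_self_eq_zero]; simp [chi]

lemma chi_one_add (t : ZMod 2) : chi (1 + t) = -chi t := by
  rw [chi_add, neg_eq_neg_one_mul]; rfl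

lemma sgn_eq_chi (a b : ZMod 2 × ZMod 2) : sgn a b = chi (a.1 * b.1 + a.2 * b.2) := rfl

lemma sgn_comm (a b : ZMod 2 × ZMod 2) : sgn a b = sgn b a := by
  simp only [sgn_eq_chi, mul_comm]

lemma sgn_mul_self (a b : ZMod 2 × ZMod 2) : sgn a b * sgn a b = 1 := chi_mul_self _

lemma sgn_add_left (a b c : ZMod 2 × ZMod 2) : sgn (a + b) c = sgn a c * sgn b c := by
  simp only [sgn_eq_chi, ← chi_add, Prod.fst_add, Prod.snd_add]; ring_nf

lemma sgn_add_right (a b c : ZMod 2 × ZMod 2) : sgn a (b + c) = sgn a b * sgn a c := by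
  rw [sgn_comm, sgn_add_left, sgn_comm b, sgn_comm c]

lemma sgn_eq_one_or_neg_one (a b : ZMod 2 × ZMod 2) : sgn a b = 1 ∨ sgn a b = -1 := by
  unfold sgn; split_ifs <;> simp

def SupportedIn (F : Finset ℤ) (x : ℤ → ℤ → ℂ) : Prop := ∀ p q, x p q ≠ 0 → p ∈ F ∧ q ∈ F

section SupportedIn

variable {F : Finset ℤ} {x y z : ℤ → ℤ → ℂ}

lemma SupportedIn.mono {G : Finset ℤ} (hx : SupportedIn F x) (hFG : F ⊆ G) : SupportedIn G x :=
  fun p q h => (hx p q h).imp (@hFG p) (@hFG q)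

lemma SupportedIn.finite (hx : SupportedIn F x) : {pq : ℤ × ℤ | x pq.1 pq.2 ≠ 0}.Finite :=
  (F ×ˢ F).finite_toSet.subset fun pq h => by simpa using hx pq.1 pq.2 h

lemma exists_supportedIn (hx : {pq : ℤ × ℤ | x pq.1 pq.2 ≠ 0}.Finite) : ∃ F, SupportedIn F x := by
  classical
  refine ⟨hx.toFinset.image Prod.fst ∪ hx.toFinset.image Prod.snd, fun p q h => ?_⟩
  have hpq : (p, q) ∈ hx.toFinset := hx.mem_toFinset.mpr h
  exact ⟨Finset.mem_union_left _ (Finset.mem_image_of_mem _ hpq),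
    Finset.mem_union_right _ (Finset.mem_image_of_mem _ hpq)⟩

lemma imul_apply_of_supportedIn_left (hx : SupportedIn F x) (y : ℤ → ℤ → ℂ) (p q : ℤ) :
    imul x y p q = ∑ r ∈ F, x p r * y r q :=
  finsum_eq_sum_of_support_subset _ fun r hr => (hx p r (left_ne_zero_of_mul hr)).2

lemma imul_apply_of_supportedIn_right (hy : SupportedIn F y) (x : ℤ → ℤ → ℂ) (p q : ℤ) :
    imul x y p q = ∑ r ∈ F, x p r * y r q :=
  finsum_eq_sum_of_support_subset _ fun r hr => (hy r q (right_ne_zero_of_mul hr)).1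

lemma SupportedIn.imul (hx : SupportedIn F x) (hy : SupportedIn F y) :
    SupportedIn F (imul x y) := by
  intro p q h
  rw [imul_apply_of_supportedIn_left hx] at h
  obtain ⟨r, -, hr⟩ := Finset.exists_ne_zero_of_sum_ne_zero h
  exact ⟨(hx p r (left_ne_zero_of_mul hr)).1, (hy r q (right_ne_zero_of_mul hr)).2⟩

lemma SupportedIn.sub (hx : SupportedIn F x) (hy : SupportedIn F y) : SupportedIn F (x - y) := by
  intro p q h
  by_cases hxpq : x p q = 0
  · exact hy p q fun hy0 => h (by simp [hxpq, hy0])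
  · exact hx p q hxpq

lemma SupportedIn.smul (c : ℂ) (hx : SupportedIn F x) : SupportedIn F (c • x) :=
  fun p q h => hx p q (right_ne_zero_of_mul h)

lemma SupportedIn.gbrI (a b : ZMod 2 × ZMod 2) (hx : SupportedIn F x) (hy : SupportedIn F y) :
    SupportedIn F (gbrI a b x y) :=
  (hx.imul hy).sub ((hy.imul hx).smul _)

lemma imul_sub_left (hz : SupportedIn F z) (x y : ℤ → ℤ → ℂ) :
    imul (x - y) z = imul x z - imul y z := by
  funext p q
  simp only [imul_apply_of_supportedIn_right hz, Pi.sub_apply, sub_mul, Finset.sum_sub_distrib]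

lemma imul_smul_left (hz : SupportedIn F z) (c : ℂ) (x : ℤ → ℤ → ℂ) :
    imul (c • x) z = c • imul x z := by
  funext p q
  simp only [imul_apply_of_supportedIn_right hz, Pi.smul_apply, smul_eq_mul, Finset.mul_sum,
    mul_assoc]

lemma imul_sub_right (hx : SupportedIn F x) (y z : ℤ → ℤ → ℂ) :
    imul x (y - z) = imul x y - imul x z := by
  funext p q
  simp only [imul_apply_of_supportedIn_left hx, Pi.sub_apply, mul_sub, Finset.sum_sub_distrib]

lemma imul_smul_right (hx : SupportedIn F x) (c : ℂ) (y : ℤ → ℤ → ℂ) :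
    imul x (c • y) = c • imul x y := by
  funext p q
  simp only [imul_apply_of_supportedIn_left hx, Pi.smul_apply, smul_eq_mul, Finset.mul_sum,
    mul_left_comm]

lemma imul_assoc (hx : SupportedIn F x) (hz : SupportedIn F z) (y : ℤ → ℤ → ℂ) :
    imul (imul x y) z = imul x (imul y z) := by
  funext p q
  simp only [imul_apply_of_supportedIn_right hz, imul_apply_of_supportedIn_left hx,
    Finset.sum_mul, Finset.mul_sum, mul_assoc]
  exact Finset.sum_comm

end SupportedIn

lemma gbrI_antisymm (a b : ZMod 2 × ZMod 2) (x y : ℤ → ℤ → ℂ) :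
    gbrI a b x y = -(sgn a b • gbrI b a y x) := by
  rw [gbrI, gbrI, smul_sub, smul_smul, sgn_comm b a, sgn_mul_self, one_smul, neg_sub]

lemma gbrI_jacobi_of_supportedIn {F : Finset ℤ} {x y z : ℤ → ℤ → ℂ} (hx : SupportedIn F x)
    (hy : SupportedIn F y) (hz : SupportedIn F z) (a b c : ZMod 2 × ZMod 2) :
    gbrI a (b + c) x (gbrI b c y z) =
      gbrI (a + b) c (gbrI a b x y) z + sgn a b • gbrI b (a + c) y (gbrI a c x z) := by
  simp only [gbrI, imul_sub_left hx, imul_sub_left hy, imul_sub_left hz, imul_sub_right hx,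
    imul_sub_right hy, imul_sub_right hz, imul_smul_left hx, imul_smul_left hy, imul_smul_left hz,
    imul_smul_right hx, imul_smul_right hy, imul_smul_right hz, imul_assoc hx hy, imul_assoc hx hz,
    imul_assoc hy hx, imul_assoc hy hz, imul_assoc hz hx, imul_assoc hz hy, sgn_add_left,
    sgn_add_right, sgn_comm b a]
  rcases sgn_eq_one_or_neg_one a b with h1 | h1 <;>
    rcases sgn_eq_one_or_neg_one a c with h2 | h2 <;>
    rcases sgn_eq_one_or_neg_one b c with h3 | h3 <;>
    rw [h1, h2, h3] <;> module

lemma finite_gbrI (a b : ZMod 2 × ZMod 2) {x y : ℤ → ℤ → ℂ}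
    (hx : {pq : ℤ × ℤ | x pq.1 pq.2 ≠ 0}.Finite) (hy : {pq : ℤ × ℤ | y pq.1 pq.2 ≠ 0}.Finite) :
    {pq : ℤ × ℤ | gbrI a b x y pq.1 pq.2 ≠ 0}.Finite := by
  obtain ⟨F, hxF⟩ := exists_supportedIn hx
  obtain ⟨G, hyG⟩ := exists_supportedIn hy
  exact ((hxF.mono Finset.subset_union_left).gbrI a b (hyG.mono Finset.subset_union_right)).finite

lemma gbrI_jacobi {x y z : ℤ → ℤ → ℂ} (hx : {pq : ℤ × ℤ | x pq.1 pq.2 ≠ 0}.Finite)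
    (hy : {pq : ℤ × ℤ | y pq.1 pq.2 ≠ 0}.Finite) (hz : {pq : ℤ × ℤ | z pq.1 pq.2 ≠ 0}.Finite)
    (a b c : ZMod 2 × ZMod 2) :
    gbrI a (b + c) x (gbrI b c y z) =
      gbrI (a + b) c (gbrI a b x y) z + sgn a b • gbrI b (a + c) y (gbrI a c x z) := by
  obtain ⟨F, hxF⟩ := exists_supportedIn hx
  obtain ⟨G, hyG⟩ := exists_supportedIn hy
  obtain ⟨H, hzH⟩ := exists_supportedIn hz
  have hF : F ⊆ F ∪ G ∪ H := Finset.subset_union_left.trans Finset.subset_union_left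
  have hG : G ⊆ F ∪ G ∪ H := Finset.subset_union_right.trans Finset.subset_union_left
  exact gbrI_jacobi_of_supportedIn (hxF.mono hF) (hyG.mono hG) (hzH.mono Finset.subset_union_right)
    a b c

def signDeg : SignType → ZMod 2 × ZMod 2
  | .zero => (1, 1)
  | .neg => (0, 0)
  | .pos => (0, 1)

def indexDeg (p : ℤ) : ZMod 2 × ZMod 2 := signDeg (SignType.sign p)

lemma sign_blockIdx (p : ℤ) : SignType.sign (blockIdx p) = SignType.sign p := by
  rcases lt_trichotomy p 0 with h | rfl | h
  · rw [sign_neg h, sign_neg (by unfold blockIdx; split_ifs <;> omega)]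
  · rfl
  · rw [sign_pos h, sign_pos (by unfold blockIdx; split_ifs <;> omega)]

lemma blkdeg_eq (i j : ℤ) : blkdeg i j = indexDeg i + indexDeg j := by
  rcases lt_trichotomy i 0 with hi | rfl | hi <;> rcases lt_trichotomy j 0 with hj | rfl | hj <;>
    simp only [indexDeg, sign_zero, sign_neg, sign_pos, *] <;> unfold blkdeg <;> split_ifs <;>
    first | decide | omega

lemma homogI_iff {d : ZMod 2 × ZMod 2} {Y : ℤ → ℤ → ℂ} :
    homogI d Y ↔ ∀ p q, indexDeg p + indexDeg q ≠ d → Y p q = 0 := by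
  simp only [homogI, blkdeg_eq, indexDeg, sign_blockIdx]

lemma indexDeg_add_eq_of_homogI {d : ZMod 2 × ZMod 2} {Y : ℤ → ℤ → ℂ} (h : homogI d Y) {p q : ℤ}
    (hY : Y p q ≠ 0) : indexDeg p + indexDeg q = d :=
  not_not.mp fun hne => hY (homogI_iff.mp h p q hne)

lemma homogI_imul {a b : ZMod 2 × ZMod 2} {x y : ℤ → ℤ → ℂ} (hx : homogI a x) (hy : homogI b y) :
    homogI (a + b) (imul x y) := by
  refine homogI_iff.mpr fun p q hpq => finsum_eq_zero_of_forall_eq_zero fun r => ?_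
  by_contra hr
  obtain ⟨hxr, hyr⟩ := mul_ne_zero_iff.mp hr
  apply hpq
  rw [← indexDeg_add_eq_of_homogI hx hxr, ← indexDeg_add_eq_of_homogI hy hyr, ← add_assoc,
    add_assoc (indexDeg p), CharTwo.add_self_eq_zero, add_zero]

lemma homogI_gbrI {a b : ZMod 2 × ZMod 2} {x y : ℤ → ℤ → ℂ} (hx : homogI a x) (hy : homogI b y) :
    homogI (a + b) (gbrI a b x y) := by
  intro p q hpq
  rw [gbrI, Pi.sub_apply, Pi.sub_apply, Pi.smul_apply, Pi.smul_apply, homogI_imul hx hy p q hpq,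
    homogI_imul hy hx p q (by rwa [add_comm]), smul_zero, sub_zero]

def blockSwap (p : ℤ) : ℤ := if p = 0 then 0 else if (Odd p ↔ 0 < p) then p + 1 else p - 1

lemma blockSwap_zero : blockSwap 0 = 0 := rfl

lemma blockSwap_involutive : Function.Involutive blockSwap := by
  intro p
  unfold blockSwap; split_ifs <;> grind

lemma sign_blockSwap (p : ℤ) : SignType.sign (blockSwap p) = SignType.sign p := by
  rcases lt_trichotomy p 0 with h | rfl | h
  · rw [sign_neg h, sign_neg (by unfold blockSwap; split_ifs <;> grind)]
  · rfl
  · rw [sign_pos h, sign_pos (by unfold blockSwap; split_ifs <;> grind)]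

lemma blockSwap_eq_zero_iff {p : ℤ} : blockSwap p = 0 ↔ p = 0 := by
  rw [← sign_eq_zero_iff, sign_blockSwap, sign_eq_zero_iff]

lemma blockSwap_pos_iff {p : ℤ} : 0 < blockSwap p ↔ 0 < p := by
  rw [← sign_eq_one_iff, sign_blockSwap, sign_eq_one_iff]

lemma indexDeg_blockSwap (p : ℤ) : indexDeg (blockSwap p) = indexDeg p := by
  rw [indexDeg, indexDeg, sign_blockSwap]

def formExp (p : ℤ) : ZMod 2 := if 0 < p ∧ Odd p then 1 else 0

lemma formExp_blockSwap (p : ℤ) : formExp (blockSwap p) = formExp p + if 0 < p then 1 else 0 := by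
  unfold formExp blockSwap; split_ifs <;> grind

def signTwist (s u : SignType) : ZMod 2 := if (s = 0 ∧ u = 1) ∨ (s = 1 ∧ u = -1) then 1 else 0

lemma signTwist_add_signTwist (s t u : SignType) :
    signTwist s t + signTwist t u =
      (signDeg s + signDeg t).1 * (signDeg t + signDeg u).1 +
        (signDeg s + signDeg t).2 * (signDeg t + signDeg u).2 + signTwist s u := by
  revert s t u; decide

lemma signTwist_swap (s u : SignType) :
    signTwist u s + (if u = 1 then 1 else 0) + (if s = 1 then 1 else 0) = signTwist s u := by
  revert s u; decide

/-- `chi (formExp p)` is the entry of `I` or `J` pairing `p` with `blockSwap p`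
(`chi_formExp_blockPos`); `signTwist` is the extra sign on pairs of sign type `(0, +)`, coming from
the minus sign in `Y_{0,j} − Y_{j,0}ᵀ J`, and `(+, -)`, forced by `twist` being an involution. -/
def twistSign (p q : ℤ) : ℂ :=
  chi (1 + formExp p + formExp q + signTwist (SignType.sign p) (SignType.sign q))

lemma twistSign_mul_twistSign (p r q : ℤ) :
    twistSign p r * twistSign r q =
      -sgn (indexDeg p + indexDeg r) (indexDeg r + indexDeg q) * twistSign p q := by
  have h := signTwist_add_signTwist (SignType.sign p) (SignType.sign r) (SignType.sign q)
  rw [twistSign, twistSign, twistSign, sgn_eq_chi, ← chi_add, neg_mul, ← chi_add, ← chi_one_add]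
  congr 1
  simp only [indexDeg, Prod.fst_add, Prod.snd_add] at h ⊢
  grind

lemma twistSign_blockSwap (p q : ℤ) : twistSign (blockSwap q) (blockSwap p) = twistSign p q := by
  have h := signTwist_swap (SignType.sign p) (SignType.sign q)
  simp only [sign_eq_one_iff] at h
  simp only [twistSign, formExp_blockSwap, sign_blockSwap]
  congr 1
  grind

lemma twistSign_mul_self (p q : ℤ) : twistSign p q * twistSign p q = 1 := chi_mul_self _

lemma twistSign_zero_zero : twistSign 0 0 = -1 := by
  simp [twistSign, formExp, signTwist, chi]

def twist (Y : ℤ → ℤ → ℂ) : ℤ → ℤ → ℂ := fun p q => twistSign p q * Y (blockSwap q) (blockSwap p)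

lemma twist_apply_blockSwap_eq_iff {Y : ℤ → ℤ → ℂ} {p q : ℤ} :
    twist Y (blockSwap q) (blockSwap p) = Y (blockSwap q) (blockSwap p) ↔ twist Y p q = Y p q := by
  simp only [twist, blockSwap_involutive _, twistSign_blockSwap]
  have hc := twistSign_mul_self p q
  constructor <;> intro h
  · linear_combination -twistSign p q * h + Y p q * hc
  · linear_combination -twistSign p q * h + Y (blockSwap q) (blockSwap p) * hc

lemma twist_sub (u v : ℤ → ℤ → ℂ) : twist (u - v) = twist u - twist v := by
  funext p q; simp only [twist, Pi.sub_apply, mul_sub]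

lemma twist_smul (c : ℂ) (u : ℤ → ℤ → ℂ) : twist (c • u) = c • twist u := by
  funext p q; simp only [twist, Pi.smul_apply, smul_eq_mul, mul_left_comm]

lemma twist_imul {a b : ZMod 2 × ZMod 2} {x y : ℤ → ℤ → ℂ} (hx : homogI a x) (hy : homogI b y) :
    twist (imul x y) = -sgn a b • imul (twist y) (twist x) := by
  funext p q
  have summand_eq : ∀ r,
      twistSign p q * (x (blockSwap q) (blockSwap r) * y (blockSwap r) (blockSwap p)) =
        -sgn a b * (twist y p r * twist x r q) := by
    intro r
    simp only [twist]
    by_cases hxy : x (blockSwap q) (blockSwap r) * y (blockSwap r) (blockSwap p) = 0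
    · rcases mul_eq_zero.mp hxy with h | h <;> simp [h]
    obtain ⟨hxr, hyr⟩ := mul_ne_zero_iff.mp hxy
    have ha := indexDeg_add_eq_of_homogI hx hxr
    have hb := indexDeg_add_eq_of_homogI hy hyr
    rw [indexDeg_blockSwap, indexDeg_blockSwap] at ha hb
    have hc := twistSign_mul_twistSign p r q
    rw [add_comm (indexDeg p), hb, add_comm (indexDeg r), ha, sgn_comm] at hc
    linear_combination x (blockSwap q) (blockSwap r) * y (blockSwap r) (blockSwap p) *
      (sgn a b * hc - twistSign p q * sgn_mul_self a b)
  calc twist (imul x y) p q = twistSign p q * ∑ᶠ r, x (blockSwap q) r * y r (blockSwap p) := rfl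
    _ = twistSign p q *
          ∑ᶠ r, x (blockSwap q) (blockSwap r) * y (blockSwap r) (blockSwap p) := by
        congr 1
        exact (finsum_comp_equiv blockSwap_involutive.toPerm
          (f := fun r => x (blockSwap q) r * y r (blockSwap p))).symm
    _ = ∑ᶠ r, -sgn a b * (twist y p r * twist x r q) := by
        rw [mul_finsum]; exact finsum_congr summand_eq
    _ = (-sgn a b • imul (twist y) (twist x)) p q := by
        rw [Pi.smul_apply, Pi.smul_apply, smul_eq_mul, imul, mul_finsum]

lemma twist_gbrI {a b : ZMod 2 × ZMod 2} {x y : ℤ → ℤ → ℂ} (hx : homogI a x) (hy : homogI b y) :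
    twist (gbrI a b x y) = gbrI a b (twist x) (twist y) := by
  rw [gbrI, gbrI, twist_sub, twist_smul, twist_imul hx hy, twist_imul hy hx, sgn_comm b a,
    smul_smul, mul_neg, sgn_mul_self, neg_smul, neg_smul, one_smul, sub_neg_eq_add, add_comm,
    ← sub_eq_add_neg]

section Blocks

variable {R : Type*} [NonUnitalNonAssocSemiring R]

lemma mul_apply_of_diag_eq_zero_left {n : Type*} {M : Matrix (Fin 2) (Fin 2) R}
    (hM : ∀ a, M a a = 0) (X : Matrix (Fin 2) n R) (a : Fin 2) (b : n) :
    (M * X) a b = M a a.rev * X a.rev b := by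
  rw [mul_apply, Fin.sum_univ_two]; fin_cases a <;> simp [hM]

lemma mul_apply_of_diag_eq_zero_right {m : Type*} {M : Matrix (Fin 2) (Fin 2) R}
    (hM : ∀ a, M a a = 0) (X : Matrix m (Fin 2) R) (a : m) (b : Fin 2) :
    (X * M) a b = X a b.rev * M b.rev b := by
  rw [mul_apply, Fin.sum_univ_two]; fin_cases b <;> simp [hM]

end Blocks

lemma IM_apply_self (a : Fin 2) : IM a a = 0 := by fin_cases a <;> rfl

lemma JM_apply_self (a : Fin 2) : JM a a = 0 := by fin_cases a <;> rfl

def formBlock (i : ℤ) : Matrix (Fin 2) (Fin 2) ℂ := if i < 0 then IM else JM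

lemma formBlock_of_neg {i : ℤ} (hi : i < 0) : formBlock i = IM := if_pos hi

lemma formBlock_of_pos {i : ℤ} (hi : 0 < i) : formBlock i = JM := if_neg hi.not_gt

lemma formBlock_apply_self (i : ℤ) (a : Fin 2) : formBlock i a a = 0 := by
  unfold formBlock; split_ifs <;> simp [IM_apply_self, JM_apply_self]

lemma formBlock_rev_mul_self (i : ℤ) (k : Fin 2) :
    formBlock i k.rev k * formBlock i k.rev k = 1 := by
  unfold formBlock; split_ifs <;> fin_cases k <;> simp [IM, JM]

def blockPos (i : ℤ) (k : Fin 2) : ℤ := pstart i + (k.val : ℤ)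

lemma blkI_apply (Y : ℤ → ℤ → ℂ) (i j : ℤ) (a b : Fin 2) :
    blkI Y i j a b = Y (blockPos i a) (blockPos j b) := rfl

lemma rowI_apply (Y : ℤ → ℤ → ℂ) (j : ℤ) (a : Fin 1) (b : Fin 2) :
    rowI Y j a b = Y 0 (blockPos j b) := rfl

lemma colI_apply (Y : ℤ → ℤ → ℂ) (j : ℤ) (a : Fin 2) (b : Fin 1) :
    colI Y j a b = Y (blockPos j a) 0 := rfl

lemma exists_eq_blockPos {p : ℤ} (hp : p ≠ 0) :
    ∃ i k, (i < 0 ↔ p < 0) ∧ (0 < i ↔ 0 < p) ∧ p = blockPos i k := by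
  obtain ⟨n, rfl | rfl⟩ := Int.even_or_odd' p
  · rcases lt_or_gt_of_ne (show n ≠ 0 by omega) with hn | hn
    · exact ⟨n, 0, by omega, by omega, by simp [blockPos, pstart, hn.not_gt]⟩
    · exact ⟨n, 1, by omega, by omega, by simp [blockPos, pstart, hn]⟩
  · rcases lt_or_ge n 0 with hn | hn
    · exact ⟨n, 1, by omega, by omega, by simp [blockPos, pstart, hn.not_gt]⟩
    · exact ⟨n + 1, 0, by omega, by omega, by simp [blockPos, pstart]; omega⟩

lemma blockSwap_blockPos {i : ℤ} (hi : i ≠ 0) (k : Fin 2) :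
    blockSwap (blockPos i k) = blockPos i k.rev := by
  rcases lt_or_gt_of_ne hi with h | h <;> fin_cases k <;>
    simp [blockSwap, blockPos, pstart, h, h.not_gt] <;> grind

lemma sign_blockPos {i : ℤ} (hi : i ≠ 0) (k : Fin 2) :
    SignType.sign (blockPos i k) = SignType.sign i := by
  have hk := k.isLt
  rcases lt_or_gt_of_ne hi with h | h
  · rw [sign_neg h, sign_neg (by unfold blockPos pstart; split_ifs <;> omega)]
  · rw [sign_pos h, sign_pos (by unfold blockPos pstart; split_ifs <;> omega)]

lemma chi_formExp_blockPos {i : ℤ} (hi : i ≠ 0) (k : Fin 2) :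
    chi (formExp (blockPos i k)) = formBlock i k.rev k := by
  rcases lt_or_gt_of_ne hi with h | h
  · fin_cases k <;> simp [chi, formExp, formBlock, IM, blockPos, pstart, h, h.not_gt]
  · have h' : ¬2 * i ≤ 1 := by omega
    fin_cases k <;> simp [chi, formExp, formBlock, JM, blockPos, pstart, h, h.not_gt, h']

lemma twistSign_blockPos {i j : ℤ} (hi : i ≠ 0) (hj : j ≠ 0) (hij : i < 0 ∨ 0 < j) (k l : Fin 2) :
    twistSign (blockPos i k) (blockPos j l) = -(formBlock i k.rev k * formBlock j l.rev l) := by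
  have hst : signTwist (SignType.sign i) (SignType.sign j) = 0 := by
    rcases hij with h | h
    · simp [signTwist, sign_neg h]
    · simp [signTwist, sign_pos h, hi]
  rw [twistSign, sign_blockPos hi, sign_blockPos hj, hst, add_zero, chi_add, chi_one_add,
    chi_formExp_blockPos hi, chi_formExp_blockPos hj, neg_mul]

lemma twistSign_zero_blockPos_of_neg {j : ℤ} (hj : j < 0) (l : Fin 2) :
    twistSign 0 (blockPos j l) = -formBlock j l.rev l := by
  rw [twistSign, sign_blockPos hj.ne, sign_neg hj, ← chi_formExp_blockPos hj.ne]
  simp [formExp, signTwist, chi_one_add]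

lemma twistSign_zero_blockPos_of_pos {j : ℤ} (hj : 0 < j) (l : Fin 2) :
    twistSign 0 (blockPos j l) = formBlock j l.rev l := by
  rw [twistSign, sign_blockPos hj.ne', sign_pos hj, ← chi_formExp_blockPos hj.ne']
  simp [formExp, signTwist, chi_one_add, add_comm]

lemma formBlock_mul_blkI_add_eq_zero_iff {Y : ℤ → ℤ → ℂ} {i j : ℤ} (hi : i ≠ 0) (hj : j ≠ 0)
    (hij : i < 0 ∨ 0 < j) :
    formBlock i * blkI Y i j + (blkI Y j i)ᵀ * formBlock j = 0 ↔
      ∀ k l : Fin 2, twist Y (blockPos i k) (blockPos j l) = Y (blockPos i k) (blockPos j l) := by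
  rw [← Matrix.ext_iff, ← Fin.revPerm.forall_congr_right]
  refine forall_congr' fun k => forall_congr' fun l => ?_
  simp only [Matrix.add_apply, Matrix.zero_apply, transpose_apply, blkI_apply, Fin.revPerm_apply,
    Fin.rev_rev, mul_apply_of_diag_eq_zero_left (formBlock_apply_self i),
    mul_apply_of_diag_eq_zero_right (formBlock_apply_self j), twist, blockSwap_blockPos hi,
    blockSwap_blockPos hj, twistSign_blockPos hi hj hij]
  have hk := formBlock_rev_mul_self i k
  constructor <;> intro h
  · linear_combination (-formBlock i k.rev k) * h + Y (blockPos i k) (blockPos j l) * hk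
  · linear_combination (-formBlock i k.rev k) * h -
      formBlock j l.rev l * Y (blockPos j l.rev) (blockPos i k.rev) * hk

lemma rowI_add_eq_zero_iff {Y : ℤ → ℤ → ℂ} {j : ℤ} (hj : j < 0) :
    rowI Y j + (colI Y j)ᵀ * IM = 0 ↔
      ∀ l : Fin 2, twist Y 0 (blockPos j l) = Y 0 (blockPos j l) := by
  rw [← Matrix.ext_iff, Fin.forall_fin_one]
  refine forall_congr' fun l => ?_
  simp only [Matrix.add_apply, Matrix.zero_apply, mul_apply_of_diag_eq_zero_right IM_apply_self,
    transpose_apply, rowI_apply, colI_apply, twist, blockSwap_blockPos hj.ne,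
    twistSign_zero_blockPos_of_neg hj, formBlock_of_neg hj, blockSwap_zero]
  constructor <;> intro h <;> linear_combination -h

lemma rowI_sub_eq_zero_iff {Y : ℤ → ℤ → ℂ} {j : ℤ} (hj : 0 < j) :
    rowI Y j - (colI Y j)ᵀ * JM = 0 ↔
      ∀ l : Fin 2, twist Y 0 (blockPos j l) = Y 0 (blockPos j l) := by
  rw [← Matrix.ext_iff, Fin.forall_fin_one]
  refine forall_congr' fun l => ?_
  simp only [Matrix.sub_apply, Matrix.zero_apply, mul_apply_of_diag_eq_zero_right JM_apply_self,
    transpose_apply, rowI_apply, colI_apply, twist, blockSwap_blockPos hj.ne',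
    twistSign_zero_blockPos_of_pos hj, formBlock_of_pos hj, blockSwap_zero]
  constructor <;> intro h <;> linear_combination -h

lemma twist_eq_self_iff {Y : ℤ → ℤ → ℂ} :
    twist Y = Y ↔ Y 0 0 = 0 ∧
      (∀ i j, i ≠ 0 → j ≠ 0 → (i < 0 ∨ 0 < j) → ∀ k l,
        twist Y (blockPos i k) (blockPos j l) = Y (blockPos i k) (blockPos j l)) ∧
      (∀ j, j ≠ 0 → ∀ l, twist Y 0 (blockPos j l) = Y 0 (blockPos j l)) := by
  constructor
  · intro h
    refine ⟨?_, fun _ _ _ _ _ _ _ => congrFun₂ h _ _, fun _ _ _ => congrFun₂ h _ _⟩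
    have h00 := congrFun₂ h 0 0
    rw [twist, twistSign_zero_zero, blockSwap_zero] at h00
    linear_combination -h00 / 2
  rintro ⟨h00, hblk, hrow⟩
  have covered : ∀ p q, q ≠ 0 → (p ≤ 0 ∨ 0 < q) → twist Y p q = Y p q := by
    intro p q hq hpq
    obtain ⟨j, l, hj, hj', rfl⟩ := exists_eq_blockPos hq
    rcases eq_or_ne p 0 with rfl | hp
    · exact hrow j (by omega) l
    obtain ⟨i, k, hi, hi', rfl⟩ := exists_eq_blockPos hp
    exact hblk i j (by omega) (by omega) (by omega) k l
  -- every other position pair is `(blockSwap q, blockSwap p)` for a covered pair `(p, q)`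
  funext p q
  by_cases hq : q ≠ 0 ∧ (p ≤ 0 ∨ 0 < q)
  · exact covered p q hq.1 hq.2
  rcases eq_or_ne p 0 with rfl | hp
  · obtain rfl : q = 0 := by omega
    rw [twist, twistSign_zero_zero, blockSwap_zero, h00, mul_zero]
  rw [← twist_apply_blockSwap_eq_iff]
  refine covered _ _ (blockSwap_eq_zero_iff.not.mpr hp) ?_
  rw [← not_lt, blockSwap_pos_iff, blockSwap_pos_iff]
  omega

lemma twist_eq_self_of_psoInf {Y : ℤ → ℤ → ℂ} (hY : psoInf Y) : twist Y = Y := by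
  obtain ⟨-, h00, hblk, hrow⟩ := hY
  refine twist_eq_self_iff.mpr ⟨h00, fun i j hi hj hij => ?_, fun j hj => ?_⟩
  · refine (formBlock_mul_blkI_add_eq_zero_iff hi hj hij).mp ?_
    rcases lt_or_gt_of_ne hi with hi' | hi' <;> rcases lt_or_gt_of_ne hj with hj' | hj'
    · rw [formBlock_of_neg hi', formBlock_of_neg hj']
      simpa using (hblk (-i) (-j) (by omega) (by omega)).1
    · rw [formBlock_of_neg hi', formBlock_of_pos hj']
      simpa using (hblk (-i) j (by omega) (by omega)).2.2
    · omega
    · rw [formBlock_of_pos hi', formBlock_of_pos hj']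
      exact (hblk i j (by omega) (by omega)).2.1
  · rcases lt_or_gt_of_ne hj with hj' | hj'
    · exact (rowI_add_eq_zero_iff hj').mp (by simpa using (hrow (-j) (by omega)).1)
    · exact (rowI_sub_eq_zero_iff hj').mp (hrow j (by omega)).2

lemma psoInf_of_twist_eq_self {Y : ℤ → ℤ → ℂ} (hfin : {pq : ℤ × ℤ | Y pq.1 pq.2 ≠ 0}.Finite)
    (hY : twist Y = Y) : psoInf Y := by
  obtain ⟨h00, hblk, hrow⟩ := twist_eq_self_iff.mp hY
  refine ⟨hfin, h00, fun i j hi hj => ⟨?_, ?_, ?_⟩, fun j hj => ⟨?_, ?_⟩⟩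
  · have h := (formBlock_mul_blkI_add_eq_zero_iff (by omega) (by omega) (by omega)).mpr
      (hblk (-i) (-j) (by omega) (by omega) (by omega))
    rwa [formBlock_of_neg (by omega), formBlock_of_neg (by omega)] at h
  · have h := (formBlock_mul_blkI_add_eq_zero_iff (by omega) (by omega) (by omega)).mpr
      (hblk i j (by omega) (by omega) (by omega))
    rwa [formBlock_of_pos (by omega), formBlock_of_pos (by omega)] at h
  · have h := (formBlock_mul_blkI_add_eq_zero_iff (by omega) (by omega) (by omega)).mpr
      (hblk (-i) j (by omega) (by omega) (by omega))
    rwa [formBlock_of_neg (by omega), formBlock_of_pos (by omega)] at h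
  · exact (rowI_add_eq_zero_iff (by omega)).mpr (hrow (-j) (by omega))
  · exact (rowI_sub_eq_zero_iff (by omega)).mpr (hrow j (by omega))

/-- `pso(∞|∞)` is a `Z₂×Z₂`-graded Lie superalgebra under
`⟦x,y⟧ = xy − (−1)^{a·b} yx`: it is closed under the bracket, and the bracket satisfies
graded antisymmetry and the graded Jacobi identity. -/
theorem psoInf_graded_Lie_superalgebra :
    (∀ (a b : ZMod 2 × ZMod 2) (x y : ℤ → ℤ → ℂ),
      psoInf x → psoInf y → homogI a x → homogI b y →
      psoInf (gbrI a b x y) ∧ homogI (a + b) (gbrI a b x y)) ∧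
    (∀ (a b : ZMod 2 × ZMod 2) (x y : ℤ → ℤ → ℂ),
      psoInf x → psoInf y → homogI a x → homogI b y →
      gbrI a b x y = -(sgn a b • gbrI b a y x)) ∧
    (∀ (a b c : ZMod 2 × ZMod 2) (x y z : ℤ → ℤ → ℂ),
      psoInf x → psoInf y → psoInf z → homogI a x → homogI b y → homogI c z →
      gbrI a (b + c) x (gbrI b c y z) =
        gbrI (a + b) c (gbrI a b x y) z + sgn a b • gbrI b (a + c) y (gbrI a c x z)) := by
  refine ⟨fun a b x y hx hy ha hb => ⟨?_, homogI_gbrI ha hb⟩,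
    fun a b x y _ _ _ _ => gbrI_antisymm a b x y,
    fun a b c x y z hx hy hz _ _ _ => gbrI_jacobi hx.1 hy.1 hz.1 a b c⟩
  refine psoInf_of_twist_eq_self (finite_gbrI a b hx.1 hy.1) ?_
  rw [twist_gbrI ha hb, twist_eq_self_of_psoInf hx, twist_eq_self_of_psoInf hy]

end
end
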